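/- arXiv:2508.00246 — 9 statements merged into one kernel-verified Lean document; each statement's English description precedes it below -/
import Mathlib

section
/- Let n ≥ 5 be odd and d ≥ 2. Let M ⊆ {1, ..., n} be a position of the game Z(n, d) with |M| ≥ 4 and |M| even, in which Player B is to move. If the position M is an A-situation, then Player A can force a win from this position. -/
/-- `AWins d turn M` : in the crossing-out game with divisor `d`, current board
`M`, and `turn = true` iff Player A is the one to move (`false` : Player B),
Player A can force a win. Players alternately remove one number from the board
until two numbers remain; A wins iff `d` divides the sum of those two numbers. -/
def AWins (d : ℕ) (turn : Bool) (M : Finset ℕ) : Prop :=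
  if M.card ≤ 2 then d ∣ M.sum id
  else if turn then ∃ a, ∃ _ : a ∈ M, AWins d false (M.erase a)
  else ∀ a, a ∈ M → AWins d true (M.erase a)
termination_by M.card
decreasing_by
  · exact Finset.card_erase_lt_of_mem ‹_›
  · exact Finset.card_erase_lt_of_mem ‹_›

/-- `aCount d M r` : the number of elements of `M` having residue `r` modulo `d`. -/
def aCount (d : ℕ) (M : Finset ℕ) (r : ℕ) : ℕ :=
  (M.filter (fun x => x % d = r)).card

/-- `Iset d` : the set of residues modulo `d` that are their own additive
inverse modulo `d`; explicitly `{0, d/2}` if `d` is even and `{0}` if `d` is odd. -/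
def Iset (d : ℕ) : Finset ℕ := if Even d then {0, d / 2} else {0}

/-- A position `M` (in the game with divisor `d`) is an *A-situation* if
`a_r = a_{d-r}` for all residues `r ∈ {0,…,d−1} \ I_d` and `a_r̂` is even
for all `r̂ ∈ I_d`. -/
def ASituation (d : ℕ) (M : Finset ℕ) : Prop :=
  (∀ r < d, r ∉ Iset d → aCount d M r = aCount d M (d - r)) ∧
  (∀ r ∈ Iset d, Even (aCount d M r))

lemma aCount_erase (d a : ℕ) {M : Finset ℕ} (ha : a ∈ M) (r : ℕ) :
    aCount d (M.erase a) r = aCount d M r - (if a % d = r then 1 else 0) := by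
  unfold aCount
  rw [Finset.filter_erase]
  by_cases h : a % d = r
  · have haf : a ∈ M.filter (fun x => x % d = r) := Finset.mem_filter.mpr ⟨ha, h⟩
    rw [if_pos h, Finset.card_erase_of_mem haf]
  · rw [if_neg h, Finset.erase_eq_of_notMem (by simp [h]), Nat.sub_zero]

lemma mem_Iset {d r : ℕ} (hd : 2 ≤ d) : r ∈ Iset d ↔ (r = 0 ∨ (Even d ∧ 2 * r = d)) := by
  unfold Iset
  by_cases h : Even d
  · simp only [if_pos h, Finset.mem_insert, Finset.mem_singleton]
    obtain ⟨k, hk⟩ := h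
    constructor
    · rintro (rfl | rfl)
      · left; rfl
      · right; exact ⟨⟨k, hk⟩, by omega⟩
    · rintro (rfl | ⟨-, h2⟩)
      · left; rfl
      · right; omega
  · simp only [if_neg h, Finset.mem_singleton]
    constructor
    · rintro rfl; left; rfl
    · rintro (rfl | ⟨h', -⟩)
      · rfl
      · exact absurd h' h

lemma key (d : ℕ) (hd : 2 ≤ d) (M : Finset ℕ) (heven : Even M.card)
    (hA : ASituation d M) : AWins d false M := by
  induction M using Finset.strongInduction with
  | _ M ih =>
  by_cases hle : M.card ≤ 2
  · -- base case : card 0 or 2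
    unfold AWins
    rw [if_pos hle]
    interval_cases h : M.card
    · rw [Finset.card_eq_zero.mp h]; simp
    · exact absurd heven (by decide)
    · obtain ⟨x, y, hxy, rfl⟩ := Finset.card_eq_two.mp h
      rw [Finset.sum_pair hxy]
      simp only [id]
      have hx : x ∈ ({x, y} : Finset ℕ) := by simp
      have hxc : 1 ≤ aCount d {x, y} (x % d) :=
        Finset.card_pos.mpr ⟨x, Finset.mem_filter.mpr ⟨hx, rfl⟩⟩
      by_cases hI : x % d ∈ Iset d
      · -- both have residue in Iset
        have he := hA.2 _ hI
        have h2 : aCount d {x, y} (x % d) = 2 := by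
          have : aCount d {x, y} (x % d) ≤ 2 := by
            have := Finset.card_filter_le ({x, y} : Finset ℕ) (fun z => z % d = x % d)
            simpa [aCount, h] using this
          rcases he with ⟨k, hk⟩; omega
        have hyr : y % d = x % d := by
          by_contra hne
          have : aCount d {x, y} (x % d) = 1 := by
            unfold aCount
            rw [Finset.filter_insert, if_pos rfl, Finset.filter_singleton, if_neg hne]
            simp [hxy]
          omega
        rcases (mem_Iset hd).mp hI with h0 | ⟨hde, h2r⟩
        · refine Nat.dvd_of_mod_eq_zero ?_
          rw [Nat.add_mod, hyr, h0]
          simp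
        · refine Nat.dvd_of_mod_eq_zero ?_
          rw [Nat.add_mod, hyr]
          have hsum : x % d + x % d = d := by omega
          rw [hsum, Nat.mod_self]
      · -- paired residues
        have hlt : x % d < d := Nat.mod_lt _ (by omega)
        have heq := hA.1 _ hlt hI
        have hyc : 1 ≤ aCount d {x, y} (d - x % d) := by omega
        obtain ⟨z, hz⟩ := Finset.card_pos.mp hyc
        rw [Finset.mem_filter] at hz
        have hne : d - x % d ≠ x % d := by
          intro hc
          exact hI ((mem_Iset hd).mpr (Or.inr ⟨⟨x % d, by omega⟩, by omega⟩))
        have hzy : z = y := by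
          rcases Finset.mem_insert.mp hz.1 with rfl | hz2
          · exact absurd hz.2.symm hne
          · exact Finset.mem_singleton.mp hz2
        subst hzy
        refine Nat.dvd_of_mod_eq_zero ?_
        rw [Nat.add_mod, hz.2]
        have hsum : x % d + (d - x % d) = d := by omega
        rw [hsum, Nat.mod_self]
  · -- inductive case: card ≥ 4
    unfold AWins
    rw [if_neg hle, if_neg (by simp)]
    intro a ha
    have hcard4 : 4 ≤ M.card := by
      rcases heven with ⟨k, hk⟩; omega
    unfold AWins
    rw [if_neg (by rw [Finset.card_erase_of_mem ha]; omega), if_pos rfl]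
    set r := a % d with hrdef
    have hrlt : r < d := Nat.mod_lt _ (by omega)
    have hac : 1 ≤ aCount d M r :=
      Finset.card_pos.mpr ⟨a, Finset.mem_filter.mpr ⟨ha, rfl⟩⟩
    by_cases hI : r ∈ Iset d
    · -- partner with same residue
      have he := hA.2 _ hI
      have hac2 : 2 ≤ aCount d M r := by rcases he with ⟨k, hk⟩; omega
      have haf : a ∈ M.filter (fun x => x % d = r) := Finset.mem_filter.mpr ⟨ha, rfl⟩
      have hcnt : 1 ≤ ((M.filter (fun x => x % d = r)).erase a).card := by
        rw [Finset.card_erase_of_mem haf]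
        have hrfl : aCount d M r = (M.filter (fun x => x % d = r)).card := rfl
        omega
      obtain ⟨b, hb⟩ := Finset.card_pos.mp hcnt
      have hba : b ≠ a := Finset.ne_of_mem_erase hb
      have hbM : b ∈ M := (Finset.mem_filter.mp (Finset.mem_of_mem_erase hb)).1
      have hbr : b % d = r := (Finset.mem_filter.mp (Finset.mem_of_mem_erase hb)).2
      have hbMe : b ∈ M.erase a := Finset.mem_erase.mpr ⟨hba, hbM⟩
      refine ⟨b, hbMe, ?_⟩
      have hcount : ∀ s, aCount d ((M.erase a).erase b) s =
          aCount d M s - (if r = s then 2 else 0) := by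
        intro s
        rw [aCount_erase d b hbMe, aCount_erase d a ha, hbr, ← hrdef]
        split_ifs with hs <;> omega
      have hss : (M.erase a).erase b ⊂ M :=
        Finset.ssubset_of_subset_of_ssubset (Finset.erase_subset _ _)
          (Finset.erase_ssubset ha)
      have hccard : ((M.erase a).erase b).card = M.card - 2 := by
        rw [Finset.card_erase_of_mem hbMe, Finset.card_erase_of_mem ha]
        omega
      refine ih _ hss ?_ ?_
      · rcases heven with ⟨k, hk⟩
        rw [hccard]
        exact ⟨k - 1, by omega⟩
      · constructor
        · intro s hs hsI
          have hs0 : s ≠ 0 := fun h0 => hsI ((mem_Iset hd).mpr (Or.inl h0))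
          have h1 : r ≠ s := fun h0 => hsI (h0 ▸ hI)
          have h2 : r ≠ d - s := by
            intro h0
            rcases (mem_Iset hd).mp hI with hr0 | ⟨hde, h2r⟩
            · omega
            · exact hsI ((mem_Iset hd).mpr (Or.inr ⟨hde, by omega⟩))
          rw [hcount, hcount, if_neg h1, if_neg h2, hA.1 _ hs hsI]
        · intro s hsI
          rw [hcount]
          by_cases hs : r = s
          · rw [if_pos hs]
            rcases hA.2 _ hsI with ⟨k, hk⟩
            exact ⟨k - 1, by omega⟩
          · rw [if_neg hs, Nat.sub_zero]
            exact hA.2 _ hsI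
    · -- partner with residue d - r
      have heq := hA.1 _ hrlt hI
      have hbc : 1 ≤ aCount d M (d - r) := by omega
      obtain ⟨b, hb⟩ := Finset.card_pos.mp hbc
      rw [Finset.mem_filter] at hb
      obtain ⟨hbM, hbr2⟩ := hb
      have hr0 : r ≠ 0 := fun h0 => hI ((mem_Iset hd).mpr (Or.inl h0))
      have hne : d - r ≠ r := fun h0 =>
        hI ((mem_Iset hd).mpr (Or.inr ⟨⟨r, by omega⟩, by omega⟩))
      have hba : b ≠ a := by
        intro h0; subst h0; omega
      have hbMe : b ∈ M.erase a := Finset.mem_erase.mpr ⟨hba, hbM⟩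
      refine ⟨b, hbMe, ?_⟩
      have hcount : ∀ s, aCount d ((M.erase a).erase b) s =
          aCount d M s - (if r = s then 1 else 0) - (if d - r = s then 1 else 0) := by
        intro s
        rw [aCount_erase d b hbMe, aCount_erase d a ha, hbr2, ← hrdef]
      have hss : (M.erase a).erase b ⊂ M :=
        Finset.ssubset_of_subset_of_ssubset (Finset.erase_subset _ _)
          (Finset.erase_ssubset ha)
      have hccard : ((M.erase a).erase b).card = M.card - 2 := by
        rw [Finset.card_erase_of_mem hbMe, Finset.card_erase_of_mem ha]
        omega
      refine ih _ hss ?_ ?_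
      · rcases heven with ⟨k, hk⟩
        rw [hccard]
        exact ⟨k - 1, by omega⟩
      · constructor
        · intro s hs hsI
          have hs0 : s ≠ 0 := fun h0 => hsI ((mem_Iset hd).mpr (Or.inl h0))
          have hA1 := hA.1 _ hs hsI
          rw [hcount, hcount]
          by_cases hs1 : r = s
          · rw [if_pos hs1, if_neg (show d - r ≠ s by omega),
                if_neg (show r ≠ d - s by omega), if_pos (show d - r = d - s by omega)]
            omega
          · rw [if_neg hs1, if_neg (show d - r ≠ d - s by omega)]
            by_cases hs2 : d - r = s
            · rw [if_pos hs2, if_pos (show r = d - s by omega)]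
              omega
            · rw [if_neg hs2, if_neg (show r ≠ d - s by omega)]
              omega
        · intro s hsI
          have h1 : r ≠ s := by
            intro h0; rw [h0] at hI; exact hI hsI
          have h2 : d - r ≠ s := by
            intro h0
            rcases (mem_Iset hd).mp hsI with hs0 | ⟨hde, h2s⟩
            · omega
            · exact hI ((mem_Iset hd).mpr (Or.inr ⟨hde, by omega⟩))
          rw [hcount, if_neg h1, if_neg h2, Nat.sub_zero, Nat.sub_zero]
          exact hA.2 _ hsI

theorem stmt_7 (n d : ℕ) (hn : Odd n) (h5 : 5 ≤ n) (hd : 2 ≤ d)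
    (M : Finset ℕ) (hM : M ⊆ Finset.Icc 1 n)
    (hcard : 4 ≤ M.card) (heven : Even M.card)
    (hA : ASituation d M) :
    AWins d false M := key d hd M heven hA
end

section
/- Let n ≥ 5 be odd. Then Player A can force a win in the game Z(n, d) for every d ∈ {(n−1)/2, (n+1)/2, n, n+1, n+2} with d ≥ 2. -/
lemma bwins (d : ℕ) (f : ℕ → ℕ) (M : Finset ℕ) (he : Even M.card)
    (hf : ∀ x ∈ M, f x ∈ M ∧ f x ≠ x ∧ f (f x) = x ∧ d ∣ x + f x) :
    AWins d false M := by
  rw [AWins]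
  by_cases h2 : M.card ≤ 2
  · simp only [h2, if_true]
    rcases Nat.lt_or_ge M.card 1 with h | h
    · have : M = ∅ := Finset.card_eq_zero.mp (by omega)
      simp [this]
    · have hc2 : M.card = 2 := by rcases he with ⟨j, hj⟩; omega
      obtain ⟨a, b, hab, rfl⟩ := Finset.card_eq_two.mp hc2
      obtain ⟨h1, h2', _, h4⟩ := hf a (by simp)
      have hb : f a = b := by
        simp only [Finset.mem_insert, Finset.mem_singleton] at h1
        tauto
      rw [Finset.sum_pair hab]
      rw [hb] at h4
      exact h4
  · simp only [h2, if_false, Bool.false_eq_true]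
    intro a ha
    rw [AWins]
    have h3 : ¬ (M.erase a).card ≤ 2 := by
      rw [Finset.card_erase_of_mem ha]
      rcases he with ⟨j, hj⟩; omega
    simp only [h3, if_false, if_true]
    obtain ⟨hfa, hne, hff, hdvd⟩ := hf a ha
    have hmem : f a ∈ M.erase a := Finset.mem_erase.mpr ⟨hne, hfa⟩
    refine ⟨f a, hmem, ?_⟩
    have hcard : ((M.erase a).erase (f a)).card = M.card - 2 := by
      rw [Finset.card_erase_of_mem hmem, Finset.card_erase_of_mem ha]; omega
    apply bwins d f
    · rw [hcard]; rcases he with ⟨j, hj⟩; exact ⟨j - 1, by omega⟩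
    · intro x hx
      rw [Finset.mem_erase, Finset.mem_erase] at hx
      obtain ⟨hx1, hx2, hxM⟩ := hx
      obtain ⟨g1, g2, g3, g4⟩ := hf x hxM
      refine ⟨Finset.mem_erase.mpr ⟨?_, Finset.mem_erase.mpr ⟨?_, g1⟩⟩, g2, g3, g4⟩
      · intro heq
        apply hx2
        have : f (f x) = f (f a) := by rw [heq]
        rw [g3, hff] at this
        exact this
      · intro heq
        apply hx1
        rw [← g3, heq]
termination_by M.card
decreasing_by
  have : ((M.erase a).erase (f a)).card = M.card - 2 := by
    rw [Finset.card_erase_of_mem hmem, Finset.card_erase_of_mem ha]; omega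
  omega

lemma awins (d : ℕ) (f : ℕ → ℕ) (M : Finset ℕ) (a₀ : ℕ) (ha₀ : a₀ ∈ M)
    (h3 : 3 ≤ M.card) (he : Even (M.erase a₀).card)
    (hf : ∀ x ∈ M.erase a₀, f x ∈ M.erase a₀ ∧ f x ≠ x ∧ f (f x) = x ∧ d ∣ x + f x) :
    AWins d true M := by
  rw [AWins]
  have h2 : ¬ M.card ≤ 2 := by omega
  simp only [h2, if_false, if_true]
  exact ⟨a₀, ha₀, bwins d f _ he hf⟩

lemma simple_awins (n d s a₀ : ℕ) (h3 : 3 ≤ n) (ha : a₀ ∈ Finset.Icc 1 n)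
    (heven : Even (n - 1)) (hds : d ∣ s)
    (hgood : ∀ x, 1 ≤ x → x ≤ n → x ≠ a₀ →
      1 ≤ s - x ∧ s - x ≤ n ∧ s - x ≠ a₀ ∧ s - x ≠ x ∧ s - (s - x) = x ∧ x + (s - x) = s) :
    AWins d true (Finset.Icc 1 n) := by
  have hc : (Finset.Icc 1 n).card = n := by simp
  apply awins d (fun x => s - x) _ a₀ ha
  · omega
  · rw [Finset.card_erase_of_mem ha, hc]; exact heven
  · intro x hx
    rw [Finset.mem_erase, Finset.mem_Icc] at hx
    obtain ⟨hx0, hx1, hx2⟩ := hx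
    obtain ⟨g1, g2, g3, g4, g5, g6⟩ := hgood x hx1 hx2 hx0
    refine ⟨?_, g4, g5, ?_⟩
    · rw [Finset.mem_erase, Finset.mem_Icc]; exact ⟨g3, g1, g2⟩
    · show d ∣ x + (s - x)
      rw [g6]; exact hds

theorem stmt_8 (n d : ℕ) (hn : Odd n) (h5 : 5 ≤ n) (hd2 : 2 ≤ d)
    (hd : d = (n - 1) / 2 ∨ d = (n + 1) / 2 ∨ d = n ∨ d = n + 1 ∨ d = n + 2) :
    AWins d true (Finset.Icc 1 n) := by
  obtain ⟨k, hk⟩ := hn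
  have hc : (Finset.Icc 1 n).card = n := by simp
  have hk2 : 2 ≤ k := by omega
  rcases hd with h | h | h | h | h
  · -- d = (n-1)/2 = k
    have hdk : d = k := by omega
    have han : n ∈ Finset.Icc 1 n := by rw [Finset.mem_Icc]; omega
    apply awins d (fun x => if x = n - 1 then k else if x = k then n - 1 else n - 1 - x) _ n han
    · omega
    · rw [Finset.card_erase_of_mem han, hc]; exact ⟨k, by omega⟩
    · intro x hx
      rw [Finset.mem_erase, Finset.mem_Icc] at hx
      obtain ⟨hx0, hx1, hx2⟩ := hx
      subst hdk
      simp only [Finset.mem_erase, Finset.mem_Icc]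
      split_ifs <;>
        refine ⟨⟨by omega, by omega, by omega⟩, by omega, by omega,
          (by first | exact ⟨3, by omega⟩ | exact ⟨2, by omega⟩)⟩
  · -- d = (n+1)/2 = k+1
    apply simple_awins n d (n + 1) (k + 1) (by omega)
      (by rw [Finset.mem_Icc]; omega) ⟨k, by omega⟩ ⟨2, by omega⟩
    intro x hx1 hx2 hx0; omega
  · -- d = n
    apply simple_awins n d n n (by omega)
      (by rw [Finset.mem_Icc]; omega) ⟨k, by omega⟩ ⟨1, by omega⟩
    intro x hx1 hx2 hx0; omega
  · -- d = n+1
    apply simple_awins n d (n + 1) (k + 1) (by omega)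
      (by rw [Finset.mem_Icc]; omega) ⟨k, by omega⟩ ⟨1, by omega⟩
    intro x hx1 hx2 hx0; omega
  · -- d = n+2
    apply simple_awins n d (n + 2) 1 (by omega)
      (by rw [Finset.mem_Icc]; omega) ⟨k, by omega⟩ ⟨1, by omega⟩
    intro x hx1 hx2 hx0; omega
end

section
/- Let n ≥ 5 be odd. Then Player A can force a win in the game Z(n, d) for every d ∈ {2, 3}. -/
/-- A board that is partitioned into pairs, each pair summing to a multiple of `d`. -/
inductive Paired (d : ℕ) : Finset ℕ → Prop where
  | empty : Paired d ∅
  | pair {M : Finset ℕ} {x y : ℕ} (hx : x ∉ M) (hy : y ∉ M) (hxy : x ≠ y)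
      (hd : d ∣ x + y) (h : Paired d M) : Paired d (insert x (insert y M))

lemma Paired.card_even {d : ℕ} {M : Finset ℕ} (h : Paired d M) : Even M.card := by
  induction h with
  | empty => simp
  | @pair M x y hx hy hxy hd h ih =>
    rw [Finset.card_insert_of_notMem (by simp [hx, hxy]),
      Finset.card_insert_of_notMem hy]
    obtain ⟨r, hr⟩ := ih
    exact ⟨r + 1, by omega⟩

lemma Paired.extract {d : ℕ} {M : Finset ℕ} (h : Paired d M) :
    ∀ a ∈ M, ∃ b ∈ M, b ≠ a ∧ d ∣ a + b ∧ Paired d ((M.erase a).erase b) := by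
  induction h with
  | empty => simp
  | @pair M x y hx hy hxy hd h ih =>
    intro a ha
    rcases Finset.mem_insert.mp ha with rfl | ha'
    · refine ⟨y, by simp, fun hyx => hxy hyx.symm, hd, ?_⟩
      rw [Finset.erase_insert (by simp [hx, hxy]), Finset.erase_insert hy]
      exact h
    · rcases Finset.mem_insert.mp ha' with rfl | haM
      · refine ⟨x, by simp, hxy, by rwa [Nat.add_comm], ?_⟩
        rw [Finset.insert_comm, Finset.erase_insert (by simp only [Finset.mem_insert, not_or]; exact ⟨fun he => hxy he.symm, hy⟩),
          Finset.erase_insert hx]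
        exact h
      · obtain ⟨b, hb, hba, hdab, hp⟩ := ih a haM
        have hxa : x ≠ a := fun he => hx (he ▸ haM)
        have hya : y ≠ a := fun he => hy (he ▸ haM)
        have hxb : x ≠ b := fun he => hx (he ▸ hb)
        have hyb : y ≠ b := fun he => hy (he ▸ hb)
        refine ⟨b, by simp [hb], hba, hdab, ?_⟩
        have hset : ((insert x (insert y M)).erase a).erase b
            = insert x (insert y ((M.erase a).erase b)) := by
          ext z
          simp only [Finset.mem_erase, Finset.mem_insert]
          constructor
          · rintro ⟨hzb, hza, (rfl | rfl | hz)⟩ <;> tauto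
          · rintro (rfl | rfl | ⟨hzb, hza, hz⟩) <;> tauto
        rw [hset]
        exact Paired.pair (by simp [Finset.mem_erase]; tauto)
          (by simp [Finset.mem_erase]; tauto) hxy hd hp

lemma paired_awins (d N : ℕ) : ∀ M : Finset ℕ, M.card ≤ N → Paired d M → AWins d false M := by
  induction N with
  | zero =>
    intro M hc hp
    rw [AWins, if_pos (by omega)]
    have : M = ∅ := Finset.card_eq_zero.mp (by omega)
    simp [this]
  | succ N ih =>
    intro M hc hp
    rw [AWins]
    by_cases h2 : M.card ≤ 2
    · rw [if_pos h2]
      have he := hp.card_even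
      rcases Nat.eq_zero_or_pos M.card with h0 | h0
      · have : M = ∅ := Finset.card_eq_zero.mp h0
        simp [this]
      · obtain ⟨a, ha⟩ := Finset.card_pos.mp h0
        obtain ⟨b, hb, hba, hdab, -⟩ := hp.extract a ha
        have hsub : ({a, b} : Finset ℕ) ⊆ M := by
          intro z hz
          rcases Finset.mem_insert.mp hz with rfl | hz'
          · exact ha
          · rwa [Finset.mem_singleton.mp hz']
        have hM : M = ({a, b} : Finset ℕ) := by
          refine (Finset.eq_of_subset_of_card_le hsub ?_).symm
          rw [Finset.card_pair (fun he => hba he.symm)]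
          omega
        rw [hM, Finset.sum_pair (fun he => hba he.symm)]
        exact hdab
    · rw [if_neg h2, if_neg (by simp)]
      intro a ha
      obtain ⟨b, hb, hba, -, hp'⟩ := hp.extract a ha
      have hce : (M.erase a).card = M.card - 1 := Finset.card_erase_of_mem ha
      obtain ⟨r, hr⟩ := hp.card_even
      rw [AWins, if_neg (by omega), if_pos rfl]
      refine ⟨b, Finset.mem_erase.mpr ⟨hba, hb⟩, ?_⟩
      apply ih _ _ hp'
      have : ((M.erase a).erase b).card = (M.erase a).card - 1 :=
        Finset.card_erase_of_mem (Finset.mem_erase.mpr ⟨hba, hb⟩)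
      omega

lemma paired2 (a k : ℕ) : Paired 2 (Finset.Icc (a + 1) (a + 4 * k)) := by
  induction k with
  | zero =>
    rw [Finset.Icc_eq_empty (by omega)]
    exact Paired.empty
  | succ k ih =>
    have hset : Finset.Icc (a + 1) (a + 4 * (k + 1))
        = insert (a + 4 * k + 1) (insert (a + 4 * k + 3)
            (insert (a + 4 * k + 2) (insert (a + 4 * k + 4)
              (Finset.Icc (a + 1) (a + 4 * k))))) := by
      ext z
      simp only [Finset.mem_Icc, Finset.mem_insert]
      omega
    rw [hset]
    refine Paired.pair ?_ ?_ (by omega) (by omega) ?_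
    · simp only [Finset.mem_insert, Finset.mem_Icc]; omega
    · simp only [Finset.mem_insert, Finset.mem_Icc]; omega
    refine Paired.pair ?_ ?_ (by omega) (by omega) ih
    · simp only [Finset.mem_Icc]; omega
    · simp only [Finset.mem_Icc]; omega

lemma paired3 (a k : ℕ) : Paired 3 (Finset.Icc (a + 1) (a + 6 * k)) := by
  induction k with
  | zero =>
    rw [Finset.Icc_eq_empty (by omega)]
    exact Paired.empty
  | succ k ih =>
    obtain hm | hm | hm : a % 3 = 0 ∨ a % 3 = 1 ∨ a % 3 = 2 := by omega
    · -- pairs (b+1,b+2), (b+3,b+6), (b+4,b+5) where b = a + 6k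
      have hset : Finset.Icc (a + 1) (a + 6 * (k + 1))
          = insert (a + 6 * k + 1) (insert (a + 6 * k + 2)
              (insert (a + 6 * k + 3) (insert (a + 6 * k + 6)
                (insert (a + 6 * k + 4) (insert (a + 6 * k + 5)
                  (Finset.Icc (a + 1) (a + 6 * k))))))) := by
        ext z
        simp only [Finset.mem_Icc, Finset.mem_insert]
        omega
      rw [hset]
      refine Paired.pair ?_ ?_ (by omega) (by omega) ?_
      · simp only [Finset.mem_insert, Finset.mem_Icc]; omega
      · simp only [Finset.mem_insert, Finset.mem_Icc]; omega
      refine Paired.pair ?_ ?_ (by omega) (by omega) ?_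
      · simp only [Finset.mem_insert, Finset.mem_Icc]; omega
      · simp only [Finset.mem_insert, Finset.mem_Icc]; omega
      refine Paired.pair ?_ ?_ (by omega) (by omega) ih
      · simp only [Finset.mem_Icc]; omega
      · simp only [Finset.mem_Icc]; omega
    · -- pairs (b+1,b+3), (b+4,b+6), (b+2,b+5)
      have hset : Finset.Icc (a + 1) (a + 6 * (k + 1))
          = insert (a + 6 * k + 1) (insert (a + 6 * k + 3)
              (insert (a + 6 * k + 4) (insert (a + 6 * k + 6)
                (insert (a + 6 * k + 2) (insert (a + 6 * k + 5)
                  (Finset.Icc (a + 1) (a + 6 * k))))))) := by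
        ext z
        simp only [Finset.mem_Icc, Finset.mem_insert]
        omega
      rw [hset]
      refine Paired.pair ?_ ?_ (by omega) (by omega) ?_
      · simp only [Finset.mem_insert, Finset.mem_Icc]; omega
      · simp only [Finset.mem_insert, Finset.mem_Icc]; omega
      refine Paired.pair ?_ ?_ (by omega) (by omega) ?_
      · simp only [Finset.mem_insert, Finset.mem_Icc]; omega
      · simp only [Finset.mem_insert, Finset.mem_Icc]; omega
      refine Paired.pair ?_ ?_ (by omega) (by omega) ih
      · simp only [Finset.mem_Icc]; omega
      · simp only [Finset.mem_Icc]; omega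
    · -- pairs (b+1,b+4), (b+2,b+3), (b+5,b+6)
      have hset : Finset.Icc (a + 1) (a + 6 * (k + 1))
          = insert (a + 6 * k + 1) (insert (a + 6 * k + 4)
              (insert (a + 6 * k + 2) (insert (a + 6 * k + 3)
                (insert (a + 6 * k + 5) (insert (a + 6 * k + 6)
                  (Finset.Icc (a + 1) (a + 6 * k))))))) := by
        ext z
        simp only [Finset.mem_Icc, Finset.mem_insert]
        omega
      rw [hset]
      refine Paired.pair ?_ ?_ (by omega) (by omega) ?_
      · simp only [Finset.mem_insert, Finset.mem_Icc]; omega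
      · simp only [Finset.mem_insert, Finset.mem_Icc]; omega
      refine Paired.pair ?_ ?_ (by omega) (by omega) ?_
      · simp only [Finset.mem_insert, Finset.mem_Icc]; omega
      · simp only [Finset.mem_insert, Finset.mem_Icc]; omega
      refine Paired.pair ?_ ?_ (by omega) (by omega) ih
      · simp only [Finset.mem_Icc]; omega
      · simp only [Finset.mem_Icc]; omega

lemma awins_of_paired {d : ℕ} {M : Finset ℕ} (h : Paired d M) : AWins d false M :=
  paired_awins d M.card M le_rfl h

theorem stmt_9 (n d : ℕ) (hn : Odd n) (h5 : 5 ≤ n) (hd : d = 2 ∨ d = 3) :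
    AWins d true (Finset.Icc 1 n) := by
  have hcard : (Finset.Icc 1 n).card = n := by
    rw [Nat.card_Icc]; omega
  rw [AWins, if_neg (by omega), if_pos rfl]
  obtain ⟨m, hm⟩ := hn
  rcases hd with rfl | rfl
  · -- d = 2
    obtain ⟨k, hk | hk⟩ : ∃ k, n = 4 * k + 1 ∨ n = 4 * k + 3 := ⟨m / 2, by omega⟩
    · -- remove n; remaining Icc 1 (4k)
      refine ⟨n, by simp [Finset.mem_Icc]; omega, ?_⟩
      have hset : (Finset.Icc 1 n).erase n = Finset.Icc (0 + 1) (0 + 4 * k) := by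
        ext z
        simp only [Finset.mem_erase, Finset.mem_Icc]
        omega
      rw [hset]
      exact awins_of_paired (paired2 0 k)
    · -- remove 4k+2; remaining Icc 1 (4k) ∪ {4k+1, 4k+3}
      refine ⟨4 * k + 2, by simp [Finset.mem_Icc]; omega, ?_⟩
      have hset : (Finset.Icc 1 n).erase (4 * k + 2)
          = insert (4 * k + 1) (insert (4 * k + 3) (Finset.Icc (0 + 1) (0 + 4 * k))) := by
        ext z
        simp only [Finset.mem_erase, Finset.mem_insert, Finset.mem_Icc]
        omega
      rw [hset]
      refine awins_of_paired (Paired.pair ?_ ?_ (by omega) (by omega) (paired2 0 k))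
      · simp only [Finset.mem_insert, Finset.mem_Icc]; omega
      · simp only [Finset.mem_Icc]; omega
  · -- d = 3
    obtain ⟨k, hk | hk | hk⟩ : ∃ k, n = 6 * k + 1 ∨ n = 6 * k + 3 ∨ n = 6 * k + 5 :=
      ⟨m / 3, by omega⟩
    · -- remove 1; remaining Icc 2 (6k+1)
      refine ⟨1, by simp [Finset.mem_Icc]; omega, ?_⟩
      have hset : (Finset.Icc 1 n).erase 1 = Finset.Icc (1 + 1) (1 + 6 * k) := by
        ext z
        simp only [Finset.mem_erase, Finset.mem_Icc]
        omega
      rw [hset]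
      exact awins_of_paired (paired3 1 k)
    · -- remove n; remaining {1,2} ∪ Icc 3 (6k+2)
      refine ⟨n, by simp [Finset.mem_Icc]; omega, ?_⟩
      have hset : (Finset.Icc 1 n).erase n
          = insert 1 (insert 2 (Finset.Icc (2 + 1) (2 + 6 * k))) := by
        ext z
        simp only [Finset.mem_erase, Finset.mem_insert, Finset.mem_Icc]
        omega
      rw [hset]
      refine awins_of_paired (Paired.pair ?_ ?_ (by omega) (by omega) (paired3 2 k))
      · simp only [Finset.mem_insert, Finset.mem_Icc]; omega
      · simp only [Finset.mem_Icc]; omega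
    · -- remove 3; remaining {1,2,4,5} ∪ Icc 6 (6k+5)
      refine ⟨3, by simp [Finset.mem_Icc]; omega, ?_⟩
      have hset : (Finset.Icc 1 n).erase 3
          = insert 1 (insert 2 (insert 4 (insert 5 (Finset.Icc (5 + 1) (5 + 6 * k))))) := by
        ext z
        simp only [Finset.mem_erase, Finset.mem_insert, Finset.mem_Icc]
        omega
      rw [hset]
      refine awins_of_paired (Paired.pair ?_ ?_ (by omega) (by omega)
        (Paired.pair ?_ ?_ (by omega) (by omega) (paired3 5 k)))
      · simp only [Finset.mem_insert, Finset.mem_Icc]; omega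
      · simp only [Finset.mem_insert, Finset.mem_Icc]; omega
      · simp only [Finset.mem_insert, Finset.mem_Icc]; omega
      · simp only [Finset.mem_Icc]; omega
end

section
/- Let n ≥ 11 be odd. Then Player A can force a win in the game Z(n, d) for every d ∈ {2, 3, 4, 5, 6}. -/
open Finset


/-- Positions (with B to move) from which A wins by pair-type strategies. -/
def BGood (d : ℕ) (M : Finset ℕ) : Prop :=
  if M.card ≤ 2 then M.card ≠ 1 ∧ d ∣ M.sum id
  else ∀ x ∈ M, ∃ y, ∃ _ : y ∈ M.erase x, BGood d ((M.erase x).erase y)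
termination_by M.card
decreasing_by
  exact lt_of_le_of_lt (Finset.card_erase_le) (Finset.card_erase_lt_of_mem ‹_›)

lemma bgood_even (d : ℕ) (M : Finset ℕ) (h : BGood d M) : Even M.card := by
  by_cases hc : M.card ≤ 2
  · rw [BGood, if_pos hc] at h
    rw [Nat.even_iff]; omega
  · rw [BGood, if_neg hc] at h
    have hne : M.Nonempty := by rw [← Finset.card_pos]; omega
    obtain ⟨x, hx⟩ := hne
    obtain ⟨y, hy, hB⟩ := h x hx
    have ih := bgood_even d _ hB
    have h1 : (M.erase x).card = M.card - 1 := Finset.card_erase_of_mem hx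
    have h2 : ((M.erase x).erase y).card = (M.erase x).card - 1 := Finset.card_erase_of_mem hy
    rw [Nat.even_iff] at ih ⊢
    omega
termination_by M.card
decreasing_by
  exact lt_of_le_of_lt (Finset.card_erase_le) (Finset.card_erase_lt_of_mem ‹_›)

lemma bgood_awins (d : ℕ) (M : Finset ℕ) (h : BGood d M) : AWins d false M := by
  by_cases hc : M.card ≤ 2
  · rw [AWins, if_pos hc]
    rw [BGood, if_pos hc] at h
    exact h.2
  · have heven := bgood_even d M h
    rw [AWins, if_neg hc]
    simp only [Bool.false_eq_true, if_false]
    intro x hx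
    rw [BGood, if_neg hc] at h
    obtain ⟨y, hy, hB⟩ := h x hx
    have hc4 : 4 ≤ M.card := by rw [Nat.even_iff] at heven; omega
    have h1 : (M.erase x).card = M.card - 1 := Finset.card_erase_of_mem hx
    rw [AWins, if_neg (by omega), if_pos rfl]
    exact ⟨y, hy, bgood_awins d _ hB⟩
termination_by M.card
decreasing_by
  exact lt_of_le_of_lt (Finset.card_erase_le) (Finset.card_erase_lt_of_mem ‹_›)

lemma bgood_pair (d x y : ℕ) (hxy : x ≠ y) (h : d ∣ x + y) : BGood d {x, y} := by
  have hcard : ({x, y} : Finset ℕ).card = 2 := Finset.card_pair hxy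
  rw [BGood, if_pos (by omega)]
  refine ⟨by omega, ?_⟩
  rw [Finset.sum_pair hxy]
  exact h

lemma bgood_union (d : ℕ) (M1 M2 : Finset ℕ) (hdisj : Disjoint M1 M2)
    (h1 : BGood d M1) (h2 : BGood d M2) : BGood d (M1 ∪ M2) := by
  have hcard : (M1 ∪ M2).card = M1.card + M2.card := Finset.card_union_of_disjoint hdisj
  have e1 := bgood_even d M1 h1
  have e2 := bgood_even d M2 h2
  rw [Nat.even_iff] at e1 e2
  by_cases hc : (M1 ∪ M2).card ≤ 2
  · rw [BGood, if_pos hc]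
    have d1 : d ∣ M1.sum id := by
      rw [BGood, if_pos (by omega)] at h1; exact h1.2
    have d2 : d ∣ M2.sum id := by
      rw [BGood, if_pos (by omega)] at h2; exact h2.2
    refine ⟨by omega, ?_⟩
    rw [Finset.sum_union hdisj]
    exact dvd_add d1 d2
  · rw [BGood, if_neg hc]
    intro x hx
    rcases Finset.mem_union.mp hx with hx1 | hx2
    · by_cases hc1 : M1.card ≤ 2
      · -- M1 = {x, y}
        have hM1 : M1.card = 2 := by
          have := Finset.card_pos.mpr ⟨x, hx1⟩; omega
        obtain ⟨a, b, hab, hM1eq⟩ := Finset.card_eq_two.mp hM1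
        have hxab : x = a ∨ x = b := by
          rw [hM1eq] at hx1; simpa using hx1
        -- y is the other one
        obtain ⟨y, hyx, hxyeq⟩ : ∃ y, y ≠ x ∧ M1 = {x, y} := by
          rcases hxab with rfl | rfl
          · exact ⟨b, hab.symm, hM1eq⟩
          · exact ⟨a, hab, by rw [hM1eq]; exact Finset.pair_comm a x⟩
        have hyM1 : y ∈ M1 := by rw [hxyeq]; simp
        have hxM2 : x ∉ M2 := Finset.disjoint_left.mp hdisj hx1
        have hyM2 : y ∉ M2 := Finset.disjoint_left.mp hdisj hyM1
        refine ⟨y, Finset.mem_erase.mpr ⟨hyx, Finset.mem_union_left _ hyM1⟩, ?_⟩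
        have seteq : ((M1 ∪ M2).erase x).erase y = M2 := by
          ext z
          simp only [Finset.mem_erase, Finset.mem_union, hxyeq, Finset.mem_insert,
            Finset.mem_singleton]
          constructor
          · rintro ⟨hz1, hz2, (rfl | rfl) | hz3⟩ <;> tauto
          · intro hz
            have hz1 : z ≠ x := fun h => hxM2 (h ▸ hz)
            have hz2 : z ≠ y := fun h => hyM2 (h ▸ hz)
            tauto
        rw [seteq]; exact h2
      · rw [BGood, if_neg hc1] at h1
        obtain ⟨y, hy, hB⟩ := h1 x hx1
        have hyM1 : y ∈ M1 := Finset.mem_of_mem_erase hy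
        have hyx : y ≠ x := (Finset.mem_erase.mp hy).1
        refine ⟨y, Finset.mem_erase.mpr ⟨hyx, Finset.mem_union_left _ hyM1⟩, ?_⟩
        have seteq : ((M1 ∪ M2).erase x).erase y = ((M1.erase x).erase y) ∪ M2 := by
          have hxM2 : x ∉ M2 := Finset.disjoint_left.mp hdisj hx1
          have hyM2 : y ∉ M2 := Finset.disjoint_left.mp hdisj hyM1
          ext z
          simp only [Finset.mem_erase, Finset.mem_union]
          constructor
          · rintro ⟨hz1, hz2, hz3 | hz3⟩
            · exact Or.inl ⟨hz1, hz2, hz3⟩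
            · exact Or.inr hz3
          · rintro (⟨hz1, hz2, hz3⟩ | hz)
            · exact ⟨hz1, hz2, Or.inl hz3⟩
            · exact ⟨fun h => hyM2 (h ▸ hz), fun h => hxM2 (h ▸ hz), Or.inr hz⟩
        rw [seteq]
        have hsub : (M1.erase x).erase y ⊆ M1 :=
          (Finset.erase_subset _ _).trans (Finset.erase_subset _ _)
        exact bgood_union d _ M2 (hdisj.mono_left hsub) hB h2
    · -- symmetric: x ∈ M2
      by_cases hc2 : M2.card ≤ 2
      · have hM2 : M2.card = 2 := by
          have := Finset.card_pos.mpr ⟨x, hx2⟩; omega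
        obtain ⟨a, b, hab, hM2eq⟩ := Finset.card_eq_two.mp hM2
        have hxab : x = a ∨ x = b := by
          rw [hM2eq] at hx2; simpa using hx2
        obtain ⟨y, hyx, hxyeq⟩ : ∃ y, y ≠ x ∧ M2 = {x, y} := by
          rcases hxab with rfl | rfl
          · exact ⟨b, hab.symm, hM2eq⟩
          · exact ⟨a, hab, by rw [hM2eq]; exact Finset.pair_comm a x⟩
        have hyM2 : y ∈ M2 := by rw [hxyeq]; simp
        have hxM1 : x ∉ M1 := Finset.disjoint_right.mp hdisj hx2
        have hyM1 : y ∉ M1 := Finset.disjoint_right.mp hdisj hyM2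
        refine ⟨y, Finset.mem_erase.mpr ⟨hyx, Finset.mem_union_right _ hyM2⟩, ?_⟩
        have seteq : ((M1 ∪ M2).erase x).erase y = M1 := by
          ext z
          simp only [Finset.mem_erase, Finset.mem_union, hxyeq, Finset.mem_insert,
            Finset.mem_singleton]
          constructor
          · rintro ⟨hz1, hz2, hz3 | (rfl | rfl)⟩ <;> tauto
          · intro hz
            have hz1 : z ≠ x := fun h => hxM1 (h ▸ hz)
            have hz2 : z ≠ y := fun h => hyM1 (h ▸ hz)
            tauto
        rw [seteq]; exact h1
      · rw [BGood, if_neg hc2] at h2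
        obtain ⟨y, hy, hB⟩ := h2 x hx2
        have hyM2 : y ∈ M2 := Finset.mem_of_mem_erase hy
        have hyx : y ≠ x := (Finset.mem_erase.mp hy).1
        refine ⟨y, Finset.mem_erase.mpr ⟨hyx, Finset.mem_union_right _ hyM2⟩, ?_⟩
        have seteq : ((M1 ∪ M2).erase x).erase y = M1 ∪ ((M2.erase x).erase y) := by
          have hxM1 : x ∉ M1 := Finset.disjoint_right.mp hdisj hx2
          have hyM1 : y ∉ M1 := Finset.disjoint_right.mp hdisj hyM2
          ext z
          simp only [Finset.mem_erase, Finset.mem_union]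
          constructor
          · rintro ⟨hz1, hz2, hz3 | hz3⟩
            · exact Or.inl hz3
            · exact Or.inr ⟨hz1, hz2, hz3⟩
          · rintro (hz | ⟨hz1, hz2, hz3⟩)
            · exact ⟨fun h => hyM1 (h ▸ hz), fun h => hxM1 (h ▸ hz), Or.inl hz⟩
            · exact ⟨hz1, hz2, Or.inr hz3⟩
        rw [seteq]
        have hsub : (M2.erase x).erase y ⊆ M2 :=
          (Finset.erase_subset _ _).trans (Finset.erase_subset _ _)
        exact bgood_union d M1 _ (hdisj.mono_right hsub) h1 hB
termination_by (M1 ∪ M2).card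
decreasing_by
  · have c1 : ((M1.erase x).erase y).card < M1.card :=
      lt_of_le_of_lt (Finset.card_erase_le) (Finset.card_erase_lt_of_mem ‹x ∈ M1›)
    have := Finset.card_union_le ((M1.erase x).erase y) M2
    omega
  · have c1 : ((M2.erase x).erase y).card < M2.card :=
      lt_of_le_of_lt (Finset.card_erase_le) (Finset.card_erase_lt_of_mem ‹x ∈ M2›)
    have := Finset.card_union_le M1 ((M2.erase x).erase y)
    omega

lemma bgood_quad (d a b c e : ℕ) (hab : a ≠ b) (hac : a ≠ c) (hae : a ≠ e)
    (hbc : b ≠ c) (hbe : b ≠ e) (hce : c ≠ e)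
    (d1 : d ∣ a + b) (d2 : d ∣ a + c) (d3 : d ∣ b + c) :
    BGood d {a, b, c, e} := by
  have hcard : ({a, b, c, e} : Finset ℕ).card = 4 := by
    rw [Finset.card_insert_of_notMem (by simp [hab, hac, hae]),
        Finset.card_insert_of_notMem (by simp [hbc, hbe]),
        Finset.card_insert_of_notMem (by simp [hce]),
        Finset.card_singleton]
  rw [BGood, if_neg (by omega)]
  intro x hx
  simp only [Finset.mem_insert, Finset.mem_singleton] at hx
  rcases hx with rfl | rfl | rfl | rfl
  · refine ⟨e, Finset.mem_erase.mpr ⟨hae.symm, by simp⟩, ?_⟩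
    have seteq : (({x, b, c, e} : Finset ℕ).erase x).erase e = {b, c} := by
      ext z
      simp only [Finset.mem_erase, Finset.mem_insert, Finset.mem_singleton]
      constructor
      · rintro ⟨h1, h2, rfl | rfl | rfl | rfl⟩ <;> tauto
      · rintro (rfl | rfl) <;>
          exact ⟨by omega, by omega, by tauto⟩
    rw [seteq]; exact bgood_pair d b c hbc d3
  · refine ⟨e, Finset.mem_erase.mpr ⟨hbe.symm, by simp⟩, ?_⟩
    have seteq : (({a, x, c, e} : Finset ℕ).erase x).erase e = {a, c} := by
      ext z
      simp only [Finset.mem_erase, Finset.mem_insert, Finset.mem_singleton]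
      constructor
      · rintro ⟨h1, h2, rfl | rfl | rfl | rfl⟩ <;> tauto
      · rintro (rfl | rfl) <;> exact ⟨by omega, by omega, by tauto⟩
    rw [seteq]; exact bgood_pair d a c hac d2
  · refine ⟨e, Finset.mem_erase.mpr ⟨hce.symm, by simp⟩, ?_⟩
    have seteq : (({a, b, x, e} : Finset ℕ).erase x).erase e = {a, b} := by
      ext z
      simp only [Finset.mem_erase, Finset.mem_insert, Finset.mem_singleton]
      constructor
      · rintro ⟨h1, h2, rfl | rfl | rfl | rfl⟩ <;> tauto
      · rintro (rfl | rfl) <;> exact ⟨by omega, by omega, by tauto⟩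
    rw [seteq]; exact bgood_pair d a b hab d1
  · refine ⟨c, Finset.mem_erase.mpr ⟨hce, by simp⟩, ?_⟩
    have seteq : (({a, b, c, x} : Finset ℕ).erase x).erase c = {a, b} := by
      ext z
      simp only [Finset.mem_erase, Finset.mem_insert, Finset.mem_singleton]
      constructor
      · rintro ⟨h1, h2, rfl | rfl | rfl | rfl⟩ <;> tauto
      · rintro (rfl | rfl) <;> exact ⟨by omega, by omega, by tauto⟩
    rw [seteq]; exact bgood_pair d a b hab d1

lemma bgood_of_pairing (d : ℕ) (M : Finset ℕ) (f : ℕ → ℕ)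
    (hf : ∀ x ∈ M, f x ∈ M ∧ f x ≠ x ∧ f (f x) = x ∧ d ∣ x + f x) : BGood d M := by
  by_cases hc : M.card ≤ 2
  · rw [BGood, if_pos hc]
    have h1 : M.card ≠ 1 := by
      intro h1
      obtain ⟨x, hx⟩ := Finset.card_eq_one.mp h1
      have := hf x (by rw [hx]; exact Finset.mem_singleton_self x)
      rw [hx] at this
      exact this.2.1 (Finset.mem_singleton.mp this.1)
    refine ⟨h1, ?_⟩
    have : M.card = 0 ∨ M.card = 2 := by omega
    rcases this with h0 | h2
    · rw [Finset.card_eq_zero.mp h0]; simp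
    · obtain ⟨x, y, hxy, hM⟩ := Finset.card_eq_two.mp h2
      subst hM
      obtain ⟨hfx, hne, _, hdvd⟩ := hf x (by simp)
      have : f x = y := by
        rcases Finset.mem_insert.mp hfx with h | h
        · exact absurd h hne
        · exact Finset.mem_singleton.mp h
      rw [Finset.sum_pair hxy]
      rw [this] at hdvd
      exact hdvd
  · rw [BGood, if_neg hc]
    intro x hx
    obtain ⟨hfx, hne, hinv, _⟩ := hf x hx
    have hfxe : f x ∈ M.erase x := Finset.mem_erase.mpr ⟨hne, hfx⟩
    refine ⟨f x, hfxe, ?_⟩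
    apply bgood_of_pairing d _ f
    intro z hz
    have hzfx : z ≠ f x := (Finset.mem_erase.mp hz).1
    have hzx : z ≠ x := (Finset.mem_erase.mp (Finset.mem_of_mem_erase hz)).1
    have hz' : z ∈ M := Finset.mem_of_mem_erase (Finset.mem_of_mem_erase hz)
    obtain ⟨h1, h2, h3, h4⟩ := hf z hz'
    refine ⟨?_, h2, h3, h4⟩
    rw [Finset.mem_erase, Finset.mem_erase]
    refine ⟨?_, ?_, h1⟩
    · intro heq
      exact hzx (by rw [← h3, heq, hinv])
    · intro heq
      exact hzfx (by rw [← heq, h3])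
termination_by M.card
decreasing_by
  exact lt_of_le_of_lt (Finset.card_erase_le) (Finset.card_erase_lt_of_mem hx)

def sigmaP (d i : ℕ) : ℕ :=
  if 2*i = d then i + d else if 2*i = 3*d then i - d
  else if i < d then d - i else if i = d then 2*d
  else if i = 2*d then d else 3*d - i

lemma sigmaP_props (d i : ℕ) (hd : 1 ≤ d) (h1 : 1 ≤ i) (h2 : i ≤ 2*d) :
    1 ≤ sigmaP d i ∧ sigmaP d i ≤ 2*d ∧ sigmaP d i ≠ i ∧
      sigmaP d (sigmaP d i) = i ∧ d ∣ i + sigmaP d i := by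
  refine ⟨?_, ?_, ?_, ?_, ?_⟩
  · unfold sigmaP; split_ifs <;> omega
  · unfold sigmaP; split_ifs <;> omega
  · unfold sigmaP; split_ifs <;> omega
  · generalize hgen : sigmaP d i = j
    unfold sigmaP at hgen
    have hjv : (j = i + d ∧ 2*i = d) ∨ (j = i - d ∧ 2*i = 3*d ∧ d ≤ i) ∨
        (j = d - i ∧ i < d ∧ 2*i ≠ d) ∨ (j = 2*d ∧ i = d) ∨ (j = d ∧ i = 2*d) ∨
        (j = 3*d - i ∧ d < i ∧ i < 2*d ∧ 2*i ≠ 3*d) := by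
      split_ifs at hgen <;> omega
    unfold sigmaP
    split_ifs <;> omega
  · have : ∃ c, i + sigmaP d i = d * c := by
      unfold sigmaP
      split_ifs
      · exact ⟨2, by omega⟩
      · exact ⟨2, by omega⟩
      · exact ⟨1, by omega⟩
      · exact ⟨3, by omega⟩
      · exact ⟨3, by omega⟩
      · exact ⟨3, by omega⟩
    exact this

lemma bgood_Icc (d N : ℕ) (hd : 1 ≤ d) (hN : 2*d ∣ N) : BGood d (Finset.Icc 1 N) := by
  apply bgood_of_pairing d _ (fun x => 2*d*((x-1)/(2*d)) + sigmaP d ((x-1) % (2*d) + 1))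
  intro x hx
  rw [Finset.mem_Icc] at hx
  obtain ⟨q, hq⟩ := hN
  have hdm := Nat.div_add_mod (x-1) (2*d)
  have hlt : (x-1) % (2*d) < 2*d := Nat.mod_lt _ (by omega)
  set i := (x-1) % (2*d) + 1 with hi
  set Q := (x-1)/(2*d) with hQ
  obtain ⟨s1, s2, s3, s4, s5⟩ := sigmaP_props d i hd (by omega) (by omega)
  have hxeq : x = 2*d*Q + i := by omega
  have hQlt : Q < q := by
    by_contra hcon
    push_neg at hcon
    have : 2*d*q ≤ 2*d*Q := Nat.mul_le_mul_left _ hcon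
    omega
  have hblock : 2*d*Q + 2*d ≤ N := by
    have h' : 2*d*(Q+1) ≤ 2*d*q := Nat.mul_le_mul_left _ hQlt
    have h'' : 2*d*(Q+1) = 2*d*Q + 2*d := by ring
    omega
  have d1 : (2*d*Q + sigmaP d i - 1) / (2*d) = Q := by
    have e1 : 2*d*Q + sigmaP d i - 1 = 2*d*(Q) + (sigmaP d i - 1) := by omega
    rw [e1, Nat.mul_add_div (by omega), Nat.div_eq_of_lt (by omega), add_zero]
  have d2 : (2*d*Q + sigmaP d i - 1) % (2*d) + 1 = sigmaP d i := by
    have e1 : 2*d*Q + sigmaP d i - 1 = 2*d*(Q) + (sigmaP d i - 1) := by omega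
    rw [e1, Nat.mul_add_mod, Nat.mod_eq_of_lt (by omega)]
    omega
  refine ⟨?_, by omega, ?_, ?_⟩
  · rw [Finset.mem_Icc]
    constructor <;> omega
  · -- f (f x) = x
    rw [d1, d2, s4]
    omega
  · -- d ∣ x + f x
    have heq : x + (2*d*Q + sigmaP d i) = d*(4*Q) + (i + sigmaP d i) := by
      rw [hxeq]; ring
    rw [heq]
    exact dvd_add ⟨4*Q, rfl⟩ s5

lemma bgood_insert_pair (d x y : ℕ) (M : Finset ℕ) (hx : x ∉ M) (hy : y ∉ M)
    (hxy : x ≠ y) (hsum : d ∣ x + y) (h : BGood d M) :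
    BGood d (insert x (insert y M)) := by
  have heq : insert x (insert y M) = {x, y} ∪ M := by
    ext z; simp [or_assoc]
  rw [heq]
  refine bgood_union d _ _ ?_ (bgood_pair d x y hxy hsum) h
  rw [Finset.disjoint_left]
  intro z hz
  rcases Finset.mem_insert.mp hz with rfl | hz'
  · exact hx
  · rw [Finset.mem_singleton.mp hz']; exact hy

lemma bgood_insert_quad (d a b c e : ℕ) (M : Finset ℕ)
    (ha : a ∉ M) (hb : b ∉ M) (hc : c ∉ M) (he : e ∉ M)
    (hab : a ≠ b) (hac : a ≠ c) (hae : a ≠ e)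
    (hbc : b ≠ c) (hbe : b ≠ e) (hce : c ≠ e)
    (d1 : d ∣ a + b) (d2 : d ∣ a + c) (d3 : d ∣ b + c) (h : BGood d M) :
    BGood d (insert a (insert b (insert c (insert e M)))) := by
  have heq : insert a (insert b (insert c (insert e M))) = {a, b, c, e} ∪ M := by
    ext z; simp [or_assoc]
  rw [heq]
  refine bgood_union d _ _ ?_ (bgood_quad d a b c e hab hac hae hbc hbe hce d1 d2 d3) h
  rw [Finset.disjoint_left]
  intro z hz
  simp only [Finset.mem_insert, Finset.mem_singleton] at hz
  rcases hz with rfl | rfl | rfl | rfl <;> assumption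

lemma awins_start (d n a : ℕ) (h2 : 2 < n) (ha1 : 1 ≤ a) (ha2 : a ≤ n)
    (h : BGood d ((Finset.Icc 1 n).erase a)) : AWins d true (Finset.Icc 1 n) := by
  have hcard : (Finset.Icc 1 n).card = n := by
    rw [Nat.card_Icc]; omega
  rw [AWins, if_neg (by omega), if_pos rfl]
  exact ⟨a, by rw [Finset.mem_Icc]; omega, bgood_awins d _ h⟩


theorem stmt_10 (n d : ℕ) (hn : Odd n) (h11 : 11 ≤ n)
    (hd : d = 2 ∨ d = 3 ∨ d = 4 ∨ d = 5 ∨ d = 6) :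
    AWins d true (Finset.Icc 1 n) := by
  obtain ⟨k, hk⟩ := hn
  rcases hd with rfl | rfl | rfl | rfl | rfl
  · -- d = 2
    have hr : n % 4 = 1 ∨ n % 4 = 3 := by omega
    rcases hr with hr | hr
    · -- n % 4 = 1, L = 1
      apply awins_start 2 n (n - 1 + 1) (by omega) (by omega) (by omega)
      have hset : (Finset.Icc 1 n).erase (n - 1 + 1) =
          (Finset.Icc 1 (n - 1)) := by
        ext z
        simp only [Finset.mem_erase, Finset.mem_insert, Finset.mem_Icc]
        omega
      rw [hset]
      exact bgood_Icc 2 _ (by omega) (by omega)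
    · -- n % 4 = 3, L = 3
      apply awins_start 2 n (n - 3 + 2) (by omega) (by omega) (by omega)
      have hset : (Finset.Icc 1 n).erase (n - 3 + 2) =
          (insert (n - 3 + 1) (insert (n - 3 + 3) (Finset.Icc 1 (n - 3)))) := by
        ext z
        simp only [Finset.mem_erase, Finset.mem_insert, Finset.mem_Icc]
        omega
      rw [hset]
      refine bgood_insert_pair 2 _ _ _ (by simp only [Finset.mem_insert, Finset.mem_Icc]; omega) (by simp only [Finset.mem_insert, Finset.mem_Icc]; omega) (by omega) (by omega) ?_
      exact bgood_Icc 2 _ (by omega) (by omega)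
  · -- d = 3
    have hr : n % 6 = 1 ∨ n % 6 = 3 ∨ n % 6 = 5 := by omega
    rcases hr with hr | hr | hr
    · -- n % 6 = 1, L = 1
      apply awins_start 3 n (n - 1 + 1) (by omega) (by omega) (by omega)
      have hset : (Finset.Icc 1 n).erase (n - 1 + 1) =
          (Finset.Icc 1 (n - 1)) := by
        ext z
        simp only [Finset.mem_erase, Finset.mem_insert, Finset.mem_Icc]
        omega
      rw [hset]
      exact bgood_Icc 3 _ (by omega) (by omega)
    · -- n % 6 = 3, L = 3
      apply awins_start 3 n (n - 3 + 3) (by omega) (by omega) (by omega)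
      have hset : (Finset.Icc 1 n).erase (n - 3 + 3) =
          (insert (n - 3 + 1) (insert (n - 3 + 2) (Finset.Icc 1 (n - 3)))) := by
        ext z
        simp only [Finset.mem_erase, Finset.mem_insert, Finset.mem_Icc]
        omega
      rw [hset]
      refine bgood_insert_pair 3 _ _ _ (by simp only [Finset.mem_insert, Finset.mem_Icc]; omega) (by simp only [Finset.mem_insert, Finset.mem_Icc]; omega) (by omega) (by omega) ?_
      exact bgood_Icc 3 _ (by omega) (by omega)
    · -- n % 6 = 5, L = 5
      apply awins_start 3 n (n - 5 + 3) (by omega) (by omega) (by omega)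
      have hset : (Finset.Icc 1 n).erase (n - 5 + 3) =
          (insert (n - 5 + 1) (insert (n - 5 + 2) (insert (n - 5 + 4) (insert (n - 5 + 5) (Finset.Icc 1 (n - 5)))))) := by
        ext z
        simp only [Finset.mem_erase, Finset.mem_insert, Finset.mem_Icc]
        omega
      rw [hset]
      refine bgood_insert_pair 3 _ _ _ (by simp only [Finset.mem_insert, Finset.mem_Icc]; omega) (by simp only [Finset.mem_insert, Finset.mem_Icc]; omega) (by omega) (by omega) ?_
      refine bgood_insert_pair 3 _ _ _ (by simp only [Finset.mem_insert, Finset.mem_Icc]; omega) (by simp only [Finset.mem_insert, Finset.mem_Icc]; omega) (by omega) (by omega) ?_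
      exact bgood_Icc 3 _ (by omega) (by omega)
  · -- d = 4
    have hr : n % 8 = 1 ∨ n % 8 = 3 ∨ n % 8 = 5 ∨ n % 8 = 7 := by omega
    rcases hr with hr | hr | hr | hr
    · -- n % 8 = 1, L = 1
      apply awins_start 4 n (n - 1 + 1) (by omega) (by omega) (by omega)
      have hset : (Finset.Icc 1 n).erase (n - 1 + 1) =
          (Finset.Icc 1 (n - 1)) := by
        ext z
        simp only [Finset.mem_erase, Finset.mem_insert, Finset.mem_Icc]
        omega
      rw [hset]
      exact bgood_Icc 4 _ (by omega) (by omega)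
    · -- n % 8 = 3, L = 3
      apply awins_start 4 n (n - 3 + 2) (by omega) (by omega) (by omega)
      have hset : (Finset.Icc 1 n).erase (n - 3 + 2) =
          (insert (n - 3 + 1) (insert (n - 3 + 3) (Finset.Icc 1 (n - 3)))) := by
        ext z
        simp only [Finset.mem_erase, Finset.mem_insert, Finset.mem_Icc]
        omega
      rw [hset]
      refine bgood_insert_pair 4 _ _ _ (by simp only [Finset.mem_insert, Finset.mem_Icc]; omega) (by simp only [Finset.mem_insert, Finset.mem_Icc]; omega) (by omega) (by omega) ?_
      exact bgood_Icc 4 _ (by omega) (by omega)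
    · -- n % 8 = 5, L = 13
      apply awins_start 4 n (n - 13 + 1) (by omega) (by omega) (by omega)
      have hset : (Finset.Icc 1 n).erase (n - 13 + 1) =
          (insert (n - 13 + 3) (insert (n - 13 + 5) (insert (n - 13 + 7) (insert (n - 13 + 9) (insert (n - 13 + 8) (insert (n - 13 + 12) (insert (n - 13 + 11) (insert (n - 13 + 13) (insert (n - 13 + 2) (insert (n - 13 + 6) (insert (n - 13 + 10) (insert (n - 13 + 4) (Finset.Icc 1 (n - 13)))))))))))))) := by
        ext z
        simp only [Finset.mem_erase, Finset.mem_insert, Finset.mem_Icc]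
        omega
      rw [hset]
      refine bgood_insert_pair 4 _ _ _ (by simp only [Finset.mem_insert, Finset.mem_Icc]; omega) (by simp only [Finset.mem_insert, Finset.mem_Icc]; omega) (by omega) (by omega) ?_
      refine bgood_insert_pair 4 _ _ _ (by simp only [Finset.mem_insert, Finset.mem_Icc]; omega) (by simp only [Finset.mem_insert, Finset.mem_Icc]; omega) (by omega) (by omega) ?_
      refine bgood_insert_pair 4 _ _ _ (by simp only [Finset.mem_insert, Finset.mem_Icc]; omega) (by simp only [Finset.mem_insert, Finset.mem_Icc]; omega) (by omega) (by omega) ?_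
      refine bgood_insert_pair 4 _ _ _ (by simp only [Finset.mem_insert, Finset.mem_Icc]; omega) (by simp only [Finset.mem_insert, Finset.mem_Icc]; omega) (by omega) (by omega) ?_
      refine bgood_insert_quad 4 _ _ _ _ _ (by simp only [Finset.mem_insert, Finset.mem_Icc]; omega) (by simp only [Finset.mem_insert, Finset.mem_Icc]; omega) (by simp only [Finset.mem_insert, Finset.mem_Icc]; omega) (by simp only [Finset.mem_insert, Finset.mem_Icc]; omega)
        (by omega) (by omega) (by omega) (by omega) (by omega) (by omega)
        (by omega) (by omega) (by omega) ?_
      exact bgood_Icc 4 _ (by omega) (by omega)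
    · -- n % 8 = 7, L = 7
      apply awins_start 4 n (n - 7 + 4) (by omega) (by omega) (by omega)
      have hset : (Finset.Icc 1 n).erase (n - 7 + 4) =
          (insert (n - 7 + 1) (insert (n - 7 + 3) (insert (n - 7 + 2) (insert (n - 7 + 6) (insert (n - 7 + 5) (insert (n - 7 + 7) (Finset.Icc 1 (n - 7)))))))) := by
        ext z
        simp only [Finset.mem_erase, Finset.mem_insert, Finset.mem_Icc]
        omega
      rw [hset]
      refine bgood_insert_pair 4 _ _ _ (by simp only [Finset.mem_insert, Finset.mem_Icc]; omega) (by simp only [Finset.mem_insert, Finset.mem_Icc]; omega) (by omega) (by omega) ?_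
      refine bgood_insert_pair 4 _ _ _ (by simp only [Finset.mem_insert, Finset.mem_Icc]; omega) (by simp only [Finset.mem_insert, Finset.mem_Icc]; omega) (by omega) (by omega) ?_
      refine bgood_insert_pair 4 _ _ _ (by simp only [Finset.mem_insert, Finset.mem_Icc]; omega) (by simp only [Finset.mem_insert, Finset.mem_Icc]; omega) (by omega) (by omega) ?_
      exact bgood_Icc 4 _ (by omega) (by omega)
  · -- d = 5
    have hr : n % 10 = 1 ∨ n % 10 = 3 ∨ n % 10 = 5 ∨ n % 10 = 7 ∨ n % 10 = 9 := by omega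
    rcases hr with hr | hr | hr | hr | hr
    · -- n % 10 = 1, L = 1
      apply awins_start 5 n (n - 1 + 1) (by omega) (by omega) (by omega)
      have hset : (Finset.Icc 1 n).erase (n - 1 + 1) =
          (Finset.Icc 1 (n - 1)) := by
        ext z
        simp only [Finset.mem_erase, Finset.mem_insert, Finset.mem_Icc]
        omega
      rw [hset]
      exact bgood_Icc 5 _ (by omega) (by omega)
    · -- n % 10 = 3, L = 3
      apply awins_start 5 n (n - 3 + 1) (by omega) (by omega) (by omega)
      have hset : (Finset.Icc 1 n).erase (n - 3 + 1) =
          (insert (n - 3 + 2) (insert (n - 3 + 3) (Finset.Icc 1 (n - 3)))) := by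
        ext z
        simp only [Finset.mem_erase, Finset.mem_insert, Finset.mem_Icc]
        omega
      rw [hset]
      refine bgood_insert_pair 5 _ _ _ (by simp only [Finset.mem_insert, Finset.mem_Icc]; omega) (by simp only [Finset.mem_insert, Finset.mem_Icc]; omega) (by omega) (by omega) ?_
      exact bgood_Icc 5 _ (by omega) (by omega)
    · -- n % 10 = 5, L = 5
      apply awins_start 5 n (n - 5 + 5) (by omega) (by omega) (by omega)
      have hset : (Finset.Icc 1 n).erase (n - 5 + 5) =
          (insert (n - 5 + 1) (insert (n - 5 + 4) (insert (n - 5 + 2) (insert (n - 5 + 3) (Finset.Icc 1 (n - 5)))))) := by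
        ext z
        simp only [Finset.mem_erase, Finset.mem_insert, Finset.mem_Icc]
        omega
      rw [hset]
      refine bgood_insert_pair 5 _ _ _ (by simp only [Finset.mem_insert, Finset.mem_Icc]; omega) (by simp only [Finset.mem_insert, Finset.mem_Icc]; omega) (by omega) (by omega) ?_
      refine bgood_insert_pair 5 _ _ _ (by simp only [Finset.mem_insert, Finset.mem_Icc]; omega) (by simp only [Finset.mem_insert, Finset.mem_Icc]; omega) (by omega) (by omega) ?_
      exact bgood_Icc 5 _ (by omega) (by omega)
    · -- n % 10 = 7, L = 17
      apply awins_start 5 n (n - 17 + 1) (by omega) (by omega) (by omega)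
      have hset : (Finset.Icc 1 n).erase (n - 17 + 1) =
          (insert (n - 17 + 3) (insert (n - 17 + 7) (insert (n - 17 + 4) (insert (n - 17 + 6) (insert (n - 17 + 8) (insert (n - 17 + 12) (insert (n - 17 + 9) (insert (n - 17 + 11) (insert (n - 17 + 13) (insert (n - 17 + 17) (insert (n - 17 + 14) (insert (n - 17 + 16) (insert (n - 17 + 5) (insert (n - 17 + 10) (insert (n - 17 + 15) (insert (n - 17 + 2) (Finset.Icc 1 (n - 17)))))))))))))))))) := by
        ext z
        simp only [Finset.mem_erase, Finset.mem_insert, Finset.mem_Icc]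
        omega
      rw [hset]
      refine bgood_insert_pair 5 _ _ _ (by simp only [Finset.mem_insert, Finset.mem_Icc]; omega) (by simp only [Finset.mem_insert, Finset.mem_Icc]; omega) (by omega) (by omega) ?_
      refine bgood_insert_pair 5 _ _ _ (by simp only [Finset.mem_insert, Finset.mem_Icc]; omega) (by simp only [Finset.mem_insert, Finset.mem_Icc]; omega) (by omega) (by omega) ?_
      refine bgood_insert_pair 5 _ _ _ (by simp only [Finset.mem_insert, Finset.mem_Icc]; omega) (by simp only [Finset.mem_insert, Finset.mem_Icc]; omega) (by omega) (by omega) ?_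
      refine bgood_insert_pair 5 _ _ _ (by simp only [Finset.mem_insert, Finset.mem_Icc]; omega) (by simp only [Finset.mem_insert, Finset.mem_Icc]; omega) (by omega) (by omega) ?_
      refine bgood_insert_pair 5 _ _ _ (by simp only [Finset.mem_insert, Finset.mem_Icc]; omega) (by simp only [Finset.mem_insert, Finset.mem_Icc]; omega) (by omega) (by omega) ?_
      refine bgood_insert_pair 5 _ _ _ (by simp only [Finset.mem_insert, Finset.mem_Icc]; omega) (by simp only [Finset.mem_insert, Finset.mem_Icc]; omega) (by omega) (by omega) ?_
      refine bgood_insert_quad 5 _ _ _ _ _ (by simp only [Finset.mem_insert, Finset.mem_Icc]; omega) (by simp only [Finset.mem_insert, Finset.mem_Icc]; omega) (by simp only [Finset.mem_insert, Finset.mem_Icc]; omega) (by simp only [Finset.mem_insert, Finset.mem_Icc]; omega)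
        (by omega) (by omega) (by omega) (by omega) (by omega) (by omega)
        (by omega) (by omega) (by omega) ?_
      exact bgood_Icc 5 _ (by omega) (by omega)
    · -- n % 10 = 9, L = 9
      apply awins_start 5 n (n - 9 + 5) (by omega) (by omega) (by omega)
      have hset : (Finset.Icc 1 n).erase (n - 9 + 5) =
          (insert (n - 9 + 1) (insert (n - 9 + 4) (insert (n - 9 + 2) (insert (n - 9 + 3) (insert (n - 9 + 6) (insert (n - 9 + 9) (insert (n - 9 + 7) (insert (n - 9 + 8) (Finset.Icc 1 (n - 9)))))))))) := by
        ext z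
        simp only [Finset.mem_erase, Finset.mem_insert, Finset.mem_Icc]
        omega
      rw [hset]
      refine bgood_insert_pair 5 _ _ _ (by simp only [Finset.mem_insert, Finset.mem_Icc]; omega) (by simp only [Finset.mem_insert, Finset.mem_Icc]; omega) (by omega) (by omega) ?_
      refine bgood_insert_pair 5 _ _ _ (by simp only [Finset.mem_insert, Finset.mem_Icc]; omega) (by simp only [Finset.mem_insert, Finset.mem_Icc]; omega) (by omega) (by omega) ?_
      refine bgood_insert_pair 5 _ _ _ (by simp only [Finset.mem_insert, Finset.mem_Icc]; omega) (by simp only [Finset.mem_insert, Finset.mem_Icc]; omega) (by omega) (by omega) ?_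
      refine bgood_insert_pair 5 _ _ _ (by simp only [Finset.mem_insert, Finset.mem_Icc]; omega) (by simp only [Finset.mem_insert, Finset.mem_Icc]; omega) (by omega) (by omega) ?_
      exact bgood_Icc 5 _ (by omega) (by omega)
  · -- d = 6
    have hr : n % 12 = 1 ∨ n % 12 = 3 ∨ n % 12 = 5 ∨ n % 12 = 7 ∨ n % 12 = 9 ∨ n % 12 = 11 := by omega
    rcases hr with hr | hr | hr | hr | hr | hr
    · -- n % 12 = 1, L = 1
      apply awins_start 6 n (n - 1 + 1) (by omega) (by omega) (by omega)
      have hset : (Finset.Icc 1 n).erase (n - 1 + 1) =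
          (Finset.Icc 1 (n - 1)) := by
        ext z
        simp only [Finset.mem_erase, Finset.mem_insert, Finset.mem_Icc]
        omega
      rw [hset]
      exact bgood_Icc 6 _ (by omega) (by omega)
    · -- n % 12 = 3, L = 15
      apply awins_start 6 n (n - 15 + 1) (by omega) (by omega) (by omega)
      have hset : (Finset.Icc 1 n).erase (n - 15 + 1) =
          (insert (n - 15 + 4) (insert (n - 15 + 8) (insert (n - 15 + 5) (insert (n - 15 + 7) (insert (n - 15 + 6) (insert (n - 15 + 12) (insert (n - 15 + 10) (insert (n - 15 + 14) (insert (n - 15 + 11) (insert (n - 15 + 13) (insert (n - 15 + 3) (insert (n - 15 + 9) (insert (n - 15 + 15) (insert (n - 15 + 2) (Finset.Icc 1 (n - 15)))))))))))))))) := by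
        ext z
        simp only [Finset.mem_erase, Finset.mem_insert, Finset.mem_Icc]
        omega
      rw [hset]
      refine bgood_insert_pair 6 _ _ _ (by simp only [Finset.mem_insert, Finset.mem_Icc]; omega) (by simp only [Finset.mem_insert, Finset.mem_Icc]; omega) (by omega) (by omega) ?_
      refine bgood_insert_pair 6 _ _ _ (by simp only [Finset.mem_insert, Finset.mem_Icc]; omega) (by simp only [Finset.mem_insert, Finset.mem_Icc]; omega) (by omega) (by omega) ?_
      refine bgood_insert_pair 6 _ _ _ (by simp only [Finset.mem_insert, Finset.mem_Icc]; omega) (by simp only [Finset.mem_insert, Finset.mem_Icc]; omega) (by omega) (by omega) ?_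
      refine bgood_insert_pair 6 _ _ _ (by simp only [Finset.mem_insert, Finset.mem_Icc]; omega) (by simp only [Finset.mem_insert, Finset.mem_Icc]; omega) (by omega) (by omega) ?_
      refine bgood_insert_pair 6 _ _ _ (by simp only [Finset.mem_insert, Finset.mem_Icc]; omega) (by simp only [Finset.mem_insert, Finset.mem_Icc]; omega) (by omega) (by omega) ?_
      refine bgood_insert_quad 6 _ _ _ _ _ (by simp only [Finset.mem_insert, Finset.mem_Icc]; omega) (by simp only [Finset.mem_insert, Finset.mem_Icc]; omega) (by simp only [Finset.mem_insert, Finset.mem_Icc]; omega) (by simp only [Finset.mem_insert, Finset.mem_Icc]; omega)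
        (by omega) (by omega) (by omega) (by omega) (by omega) (by omega)
        (by omega) (by omega) (by omega) ?_
      exact bgood_Icc 6 _ (by omega) (by omega)
    · -- n % 12 = 5, L = 5
      apply awins_start 6 n (n - 5 + 3) (by omega) (by omega) (by omega)
      have hset : (Finset.Icc 1 n).erase (n - 5 + 3) =
          (insert (n - 5 + 1) (insert (n - 5 + 5) (insert (n - 5 + 2) (insert (n - 5 + 4) (Finset.Icc 1 (n - 5)))))) := by
        ext z
        simp only [Finset.mem_erase, Finset.mem_insert, Finset.mem_Icc]
        omega
      rw [hset]
      refine bgood_insert_pair 6 _ _ _ (by simp only [Finset.mem_insert, Finset.mem_Icc]; omega) (by simp only [Finset.mem_insert, Finset.mem_Icc]; omega) (by omega) (by omega) ?_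
      refine bgood_insert_pair 6 _ _ _ (by simp only [Finset.mem_insert, Finset.mem_Icc]; omega) (by simp only [Finset.mem_insert, Finset.mem_Icc]; omega) (by omega) (by omega) ?_
      exact bgood_Icc 6 _ (by omega) (by omega)
    · -- n % 12 = 7, L = 19
      apply awins_start 6 n (n - 19 + 1) (by omega) (by omega) (by omega)
      have hset : (Finset.Icc 1 n).erase (n - 19 + 1) =
          (insert (n - 19 + 2) (insert (n - 19 + 4) (insert (n - 19 + 5) (insert (n - 19 + 7) (insert (n - 19 + 8) (insert (n - 19 + 10) (insert (n - 19 + 11) (insert (n - 19 + 13) (insert (n - 19 + 12) (insert (n - 19 + 18) (insert (n - 19 + 14) (insert (n - 19 + 16) (insert (n - 19 + 17) (insert (n - 19 + 19) (insert (n - 19 + 3) (insert (n - 19 + 9) (insert (n - 19 + 15) (insert (n - 19 + 6) (Finset.Icc 1 (n - 19)))))))))))))))))))) := by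
        ext z
        simp only [Finset.mem_erase, Finset.mem_insert, Finset.mem_Icc]
        omega
      rw [hset]
      refine bgood_insert_pair 6 _ _ _ (by simp only [Finset.mem_insert, Finset.mem_Icc]; omega) (by simp only [Finset.mem_insert, Finset.mem_Icc]; omega) (by omega) (by omega) ?_
      refine bgood_insert_pair 6 _ _ _ (by simp only [Finset.mem_insert, Finset.mem_Icc]; omega) (by simp only [Finset.mem_insert, Finset.mem_Icc]; omega) (by omega) (by omega) ?_
      refine bgood_insert_pair 6 _ _ _ (by simp only [Finset.mem_insert, Finset.mem_Icc]; omega) (by simp only [Finset.mem_insert, Finset.mem_Icc]; omega) (by omega) (by omega) ?_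
      refine bgood_insert_pair 6 _ _ _ (by simp only [Finset.mem_insert, Finset.mem_Icc]; omega) (by simp only [Finset.mem_insert, Finset.mem_Icc]; omega) (by omega) (by omega) ?_
      refine bgood_insert_pair 6 _ _ _ (by simp only [Finset.mem_insert, Finset.mem_Icc]; omega) (by simp only [Finset.mem_insert, Finset.mem_Icc]; omega) (by omega) (by omega) ?_
      refine bgood_insert_pair 6 _ _ _ (by simp only [Finset.mem_insert, Finset.mem_Icc]; omega) (by simp only [Finset.mem_insert, Finset.mem_Icc]; omega) (by omega) (by omega) ?_
      refine bgood_insert_pair 6 _ _ _ (by simp only [Finset.mem_insert, Finset.mem_Icc]; omega) (by simp only [Finset.mem_insert, Finset.mem_Icc]; omega) (by omega) (by omega) ?_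
      refine bgood_insert_quad 6 _ _ _ _ _ (by simp only [Finset.mem_insert, Finset.mem_Icc]; omega) (by simp only [Finset.mem_insert, Finset.mem_Icc]; omega) (by simp only [Finset.mem_insert, Finset.mem_Icc]; omega) (by simp only [Finset.mem_insert, Finset.mem_Icc]; omega)
        (by omega) (by omega) (by omega) (by omega) (by omega) (by omega)
        (by omega) (by omega) (by omega) ?_
      exact bgood_Icc 6 _ (by omega) (by omega)
    · -- n % 12 = 9, L = 21
      apply awins_start 6 n (n - 21 + 1) (by omega) (by omega) (by omega)
      have hset : (Finset.Icc 1 n).erase (n - 21 + 1) =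
          (insert (n - 21 + 3) (insert (n - 21 + 9) (insert (n - 21 + 4) (insert (n - 21 + 8) (insert (n - 21 + 5) (insert (n - 21 + 7) (insert (n - 21 + 10) (insert (n - 21 + 14) (insert (n - 21 + 11) (insert (n - 21 + 13) (insert (n - 21 + 15) (insert (n - 21 + 21) (insert (n - 21 + 16) (insert (n - 21 + 20) (insert (n - 21 + 17) (insert (n - 21 + 19) (insert (n - 21 + 6) (insert (n - 21 + 12) (insert (n - 21 + 18) (insert (n - 21 + 2) (Finset.Icc 1 (n - 21)))))))))))))))))))))) := by
        ext z
        simp only [Finset.mem_erase, Finset.mem_insert, Finset.mem_Icc]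
        omega
      rw [hset]
      refine bgood_insert_pair 6 _ _ _ (by simp only [Finset.mem_insert, Finset.mem_Icc]; omega) (by simp only [Finset.mem_insert, Finset.mem_Icc]; omega) (by omega) (by omega) ?_
      refine bgood_insert_pair 6 _ _ _ (by simp only [Finset.mem_insert, Finset.mem_Icc]; omega) (by simp only [Finset.mem_insert, Finset.mem_Icc]; omega) (by omega) (by omega) ?_
      refine bgood_insert_pair 6 _ _ _ (by simp only [Finset.mem_insert, Finset.mem_Icc]; omega) (by simp only [Finset.mem_insert, Finset.mem_Icc]; omega) (by omega) (by omega) ?_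
      refine bgood_insert_pair 6 _ _ _ (by simp only [Finset.mem_insert, Finset.mem_Icc]; omega) (by simp only [Finset.mem_insert, Finset.mem_Icc]; omega) (by omega) (by omega) ?_
      refine bgood_insert_pair 6 _ _ _ (by simp only [Finset.mem_insert, Finset.mem_Icc]; omega) (by simp only [Finset.mem_insert, Finset.mem_Icc]; omega) (by omega) (by omega) ?_
      refine bgood_insert_pair 6 _ _ _ (by simp only [Finset.mem_insert, Finset.mem_Icc]; omega) (by simp only [Finset.mem_insert, Finset.mem_Icc]; omega) (by omega) (by omega) ?_
      refine bgood_insert_pair 6 _ _ _ (by simp only [Finset.mem_insert, Finset.mem_Icc]; omega) (by simp only [Finset.mem_insert, Finset.mem_Icc]; omega) (by omega) (by omega) ?_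
      refine bgood_insert_pair 6 _ _ _ (by simp only [Finset.mem_insert, Finset.mem_Icc]; omega) (by simp only [Finset.mem_insert, Finset.mem_Icc]; omega) (by omega) (by omega) ?_
      refine bgood_insert_quad 6 _ _ _ _ _ (by simp only [Finset.mem_insert, Finset.mem_Icc]; omega) (by simp only [Finset.mem_insert, Finset.mem_Icc]; omega) (by simp only [Finset.mem_insert, Finset.mem_Icc]; omega) (by simp only [Finset.mem_insert, Finset.mem_Icc]; omega)
        (by omega) (by omega) (by omega) (by omega) (by omega) (by omega)
        (by omega) (by omega) (by omega) ?_
      exact bgood_Icc 6 _ (by omega) (by omega)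
    · -- n % 12 = 11, L = 11
      apply awins_start 6 n (n - 11 + 6) (by omega) (by omega) (by omega)
      have hset : (Finset.Icc 1 n).erase (n - 11 + 6) =
          (insert (n - 11 + 1) (insert (n - 11 + 5) (insert (n - 11 + 2) (insert (n - 11 + 4) (insert (n - 11 + 3) (insert (n - 11 + 9) (insert (n - 11 + 7) (insert (n - 11 + 11) (insert (n - 11 + 8) (insert (n - 11 + 10) (Finset.Icc 1 (n - 11)))))))))))) := by
        ext z
        simp only [Finset.mem_erase, Finset.mem_insert, Finset.mem_Icc]
        omega
      rw [hset]
      refine bgood_insert_pair 6 _ _ _ (by simp only [Finset.mem_insert, Finset.mem_Icc]; omega) (by simp only [Finset.mem_insert, Finset.mem_Icc]; omega) (by omega) (by omega) ?_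
      refine bgood_insert_pair 6 _ _ _ (by simp only [Finset.mem_insert, Finset.mem_Icc]; omega) (by simp only [Finset.mem_insert, Finset.mem_Icc]; omega) (by omega) (by omega) ?_
      refine bgood_insert_pair 6 _ _ _ (by simp only [Finset.mem_insert, Finset.mem_Icc]; omega) (by simp only [Finset.mem_insert, Finset.mem_Icc]; omega) (by omega) (by omega) ?_
      refine bgood_insert_pair 6 _ _ _ (by simp only [Finset.mem_insert, Finset.mem_Icc]; omega) (by simp only [Finset.mem_insert, Finset.mem_Icc]; omega) (by omega) (by omega) ?_
      refine bgood_insert_pair 6 _ _ _ (by simp only [Finset.mem_insert, Finset.mem_Icc]; omega) (by simp only [Finset.mem_insert, Finset.mem_Icc]; omega) (by omega) (by omega) ?_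
      exact bgood_Icc 6 _ (by omega) (by omega)
end

section
/- Let d ≥ 7 be even and let k ≥ 1. Then Player A can force a win in the game Z(n, d) for every n ∈ {kd − 1, (k+1)·d + 1, (k+3)·d − 3}. -/
set_option maxHeartbeats 1000000


def IsPairing (d : ℕ) (f : ℕ → ℕ) (M : Finset ℕ) : Prop :=
  ∀ x ∈ M, f x ∈ M ∧ f x ≠ x ∧ f (f x) = x ∧ d ∣ (x + f x)

def GoodPairs (d : ℕ) (M : Finset ℕ) : Prop := ∃ f, IsPairing d f M

lemma pairing_erase {d : ℕ} {f : ℕ → ℕ} {M : Finset ℕ} (hf : IsPairing d f M)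
    {a : ℕ} (ha : a ∈ M) : IsPairing d f ((M.erase a).erase (f a)) := by
  intro x hx
  rw [Finset.mem_erase, Finset.mem_erase] at hx
  obtain ⟨hxfa, hxa, hxM⟩ := hx
  obtain ⟨h1, h2, h3, h4⟩ := hf x hxM
  obtain ⟨g1, g2, g3, g4⟩ := hf a ha
  refine ⟨?_, h2, h3, h4⟩
  rw [Finset.mem_erase, Finset.mem_erase]
  refine ⟨fun h => hxa ?_, fun h => hxfa ?_, h1⟩
  · have := congrArg f h; rwa [h3, g3] at this
  · have := congrArg f h; rwa [h3] at this

lemma pairing_even_card {d : ℕ} {f : ℕ → ℕ} :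
    ∀ M : Finset ℕ, IsPairing d f M → Even M.card := by
  intro M
  induction M using Finset.strongInduction with
  | _ M ih =>
    intro hf
    rcases M.eq_empty_or_nonempty with rfl | ⟨x, hx⟩
    · simp
    · obtain ⟨h1, h2, h3, h4⟩ := hf x hx
      have hsub : (M.erase x).erase (f x) ⊂ M :=
        Finset.ssubset_of_subset_of_ssubset (Finset.erase_subset _ _)
          (Finset.erase_ssubset hx)
      have he := ih _ hsub (pairing_erase hf hx)
      have hlt : 1 < M.card := Finset.one_lt_card.2 ⟨x, hx, f x, h1, fun h => h2 h.symm⟩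
      have hc : M.card = ((M.erase x).erase (f x)).card + 2 := by
        rw [Finset.card_erase_of_mem (Finset.mem_erase.2 ⟨h2, h1⟩),
          Finset.card_erase_of_mem hx]
        omega
      rcases he with ⟨c, hc'⟩
      exact ⟨c + 1, by omega⟩

lemma gp_awins (d : ℕ) : ∀ M : Finset ℕ, GoodPairs d M → AWins d false M := by
  intro M
  induction M using Finset.strongInduction with
  | _ M ih =>
    rintro ⟨f, hf⟩
    have hev := pairing_even_card M hf
    rw [AWins]
    by_cases h2 : M.card ≤ 2
    · rw [if_pos h2]
      rcases M.eq_empty_or_nonempty with rfl | ⟨x, hx⟩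
      · simp
      obtain ⟨h1, hne, h3, h4⟩ := hf x hx
      have hlt : 1 < M.card := Finset.one_lt_card.2 ⟨x, hx, f x, h1, fun h => hne h.symm⟩
      have hMe : M = {x, f x} := by
        refine (Finset.eq_of_subset_of_card_le ?_ ?_).symm
        · intro y hy
          rcases Finset.mem_insert.1 hy with rfl | hy
          · exact hx
          · rw [Finset.mem_singleton.1 hy]; exact h1
        · rw [Finset.card_pair (fun h => hne h.symm)]; omega
      rw [hMe, Finset.sum_pair (fun h => hne h.symm)]
      exact h4
    · rw [if_neg h2]
      simp only [Bool.false_eq_true, if_false]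
      intro a ha
      rw [AWins]
      have hca := Finset.card_erase_of_mem ha
      have hc3 : ¬ (M.erase a).card ≤ 2 := by
        rcases hev with ⟨c, hcc⟩; omega
      rw [if_neg hc3, if_pos rfl]
      obtain ⟨h1, hne, h3, h4⟩ := hf a ha
      refine ⟨f a, Finset.mem_erase.2 ⟨hne, h1⟩, ih _ ?_ ⟨f, pairing_erase hf ha⟩⟩
      exact Finset.ssubset_of_subset_of_ssubset (Finset.erase_subset _ _)
        (Finset.erase_ssubset ha)

lemma gp_insert {d : ℕ} {R : Finset ℕ} {u v : ℕ} (h : GoodPairs d R)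
    (hu : u ∉ R) (hv : v ∉ R) (huv : u ≠ v) (hsum : d ∣ u + v) :
    GoodPairs d (insert u (insert v R)) := by
  obtain ⟨f, hf⟩ := h
  set g := fun y => if y = u then v else if y = v then u else f y with hg
  have gu : g u = v := by simp [hg]
  have gv : g v = u := by simp [hg, (Ne.symm huv : v ≠ u)]
  have gx : ∀ x ∈ R, g x = f x := by
    intro x hx
    have hxu : x ≠ u := fun h => hu (h ▸ hx)
    have hxv : x ≠ v := fun h => hv (h ▸ hx)
    simp [hg, hxu, hxv]
  refine ⟨g, ?_⟩
  intro x hx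
  rcases Finset.mem_insert.1 hx with rfl | hx'
  · rw [gu]
    exact ⟨Finset.mem_insert_of_mem (Finset.mem_insert_self _ _), huv.symm, gv, hsum⟩
  rcases Finset.mem_insert.1 hx' with rfl | hxR
  · rw [gv]
    exact ⟨Finset.mem_insert_self _ _, huv, gu, by rwa [Nat.add_comm]⟩
  · obtain ⟨h1, h2, h3, h4⟩ := hf x hxR
    rw [gx x hxR, gx _ h1]
    exact ⟨Finset.mem_insert_of_mem (Finset.mem_insert_of_mem h1), h2, h3, h4⟩

def TS (d : ℕ) (M : Finset ℕ) : Prop :=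
  ∃ t u v s : ℕ, t ∈ M ∧ u ∈ M ∧ v ∈ M ∧ s ∈ M ∧
    t ≠ u ∧ t ≠ v ∧ t ≠ s ∧ u ≠ v ∧ u ≠ s ∧ v ≠ s ∧
    d ∣ t + u ∧ d ∣ t + v ∧ d ∣ u + v ∧
    GoodPairs d ((((M.erase t).erase u).erase v).erase s)

lemma ts_awins (d : ℕ) : ∀ M : Finset ℕ, TS d M → AWins d false M := by
  intro M
  induction M using Finset.strongInduction with
  | _ M ih =>
  rintro ⟨t, u, v, s, ht, hu, hv, hs, htu, htv, hts, huv, hus, hvs, dtu, dtv, duv, f, hf⟩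
  have hRmem : ∀ y, y ∈ (((M.erase t).erase u).erase v).erase s ↔
      (y ≠ t ∧ y ≠ u ∧ y ≠ v ∧ y ≠ s ∧ y ∈ M) := by
    intro y
    simp only [Finset.mem_erase]
    tauto
  set R := (((M.erase t).erase u).erase v).erase s with hR
  have huR : u ∉ R := fun h => ((hRmem u).1 h).2.1 rfl
  have hvR : v ∉ R := fun h => ((hRmem v).1 h).2.2.1 rfl
  have htR : t ∉ R := fun h => ((hRmem t).1 h).1 rfl
  have h4 : 4 ≤ M.card := by
    have hsub : ({t, u, v, s} : Finset ℕ) ⊆ M := by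
      intro y hy
      simp only [Finset.mem_insert, Finset.mem_singleton] at hy
      rcases hy with rfl | rfl | rfl | rfl <;> assumption
    have hcard : ({t, u, v, s} : Finset ℕ).card = 4 := by
      rw [Finset.card_insert_of_notMem (by simp [htu, htv, hts]),
        Finset.card_insert_of_notMem (by simp [huv, hus]),
        Finset.card_pair hvs]
    calc 4 = ({t, u, v, s} : Finset ℕ).card := hcard.symm
    _ ≤ M.card := Finset.card_le_card hsub
  rw [AWins, if_neg (by omega : ¬ M.card ≤ 2)]
  simp only [Bool.false_eq_true, if_false]
  intro a ha
  rw [AWins]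
  have hcae : (M.erase a).card = M.card - 1 := Finset.card_erase_of_mem ha
  rw [if_neg (by omega : ¬ (M.erase a).card ≤ 2), if_pos rfl]
  have hkey : ∀ a₁ b p q : ℕ, a₁ ∈ M → b ∈ M → a₁ ≠ b →
      ({t, u, v, s} : Finset ℕ) = {a₁, b, p, q} →
      p ∈ M → q ∈ M → p ≠ q → p ≠ a₁ → p ≠ b → q ≠ a₁ → q ≠ b →
      (M.erase a₁).erase b = insert p (insert q R) := by
    intro a₁ b p q haM hbM hab hset hpM hqM hpq hpa hpb hqa hqb
    ext y
    simp only [Finset.mem_erase, Finset.mem_insert, hRmem]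
    constructor
    · rintro ⟨hyb, hya, hyM⟩
      by_cases h1 : y = p
      · exact Or.inl h1
      by_cases h2 : y = q
      · exact Or.inr (Or.inl h2)
      refine Or.inr (Or.inr ⟨?_, ?_, ?_, ?_, hyM⟩) <;>
      · intro hye
        have : y ∈ ({t, u, v, s} : Finset ℕ) := by
          simp only [Finset.mem_insert, Finset.mem_singleton]; tauto
        rw [hset] at this
        simp only [Finset.mem_insert, Finset.mem_singleton] at this
        tauto
    · rintro (rfl | rfl | ⟨h1, h2, h3, h4', hyM⟩)
      · exact ⟨hpb, hpa, hpM⟩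
      · exact ⟨hqb, hqa, hqM⟩
      · refine ⟨?_, ?_, hyM⟩
        · intro hyeq
          have hb : y ∈ ({a₁, b, p, q} : Finset ℕ) := by
            simp [hyeq]
          rw [← hset] at hb
          simp only [Finset.mem_insert, Finset.mem_singleton] at hb
          tauto
        · intro hyeq
          have hb : y ∈ ({a₁, b, p, q} : Finset ℕ) := by
            simp [hyeq]
          rw [← hset] at hb
          simp only [Finset.mem_insert, Finset.mem_singleton] at hb
          tauto
  by_cases hat : a = t
  · rw [hat]
    refine ⟨s, Finset.mem_erase.2 ⟨Ne.symm hts, hs⟩, ?_⟩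
    have hset : (M.erase t).erase s = insert u (insert v R) := by
      refine hkey t s u v ht hs hts ?_ hu hv huv (Ne.symm htu) hus (Ne.symm htv) hvs
      ext y
      simp only [Finset.mem_insert, Finset.mem_singleton]
      tauto
    rw [hset]
    exact gp_awins _ _ (gp_insert ⟨f, hf⟩ huR hvR huv duv)
  by_cases hau : a = u
  · rw [hau]
    refine ⟨s, Finset.mem_erase.2 ⟨Ne.symm hus, hs⟩, ?_⟩
    have hset : (M.erase u).erase s = insert t (insert v R) := by
      refine hkey u s t v hu hs hus ?_ ht hv htv htu hts (Ne.symm huv) hvs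
      ext y
      simp only [Finset.mem_insert, Finset.mem_singleton]
      tauto
    rw [hset]
    exact gp_awins _ _ (gp_insert ⟨f, hf⟩ htR hvR htv dtv)
  by_cases hav : a = v
  · rw [hav]
    refine ⟨s, Finset.mem_erase.2 ⟨Ne.symm hvs, hs⟩, ?_⟩
    have hset : (M.erase v).erase s = insert t (insert u R) := by
      refine hkey v s t u hv hs hvs ?_ ht hu htu htv hts huv hus
      ext y
      simp only [Finset.mem_insert, Finset.mem_singleton]
      tauto
    rw [hset]
    exact gp_awins _ _ (gp_insert ⟨f, hf⟩ htR huR htu dtu)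
  by_cases has : a = s
  · rw [has]
    refine ⟨t, Finset.mem_erase.2 ⟨hts, ht⟩, ?_⟩
    have hset : (M.erase s).erase t = insert u (insert v R) := by
      refine hkey s t u v hs ht (Ne.symm hts) ?_ hu hv huv hus (Ne.symm htu)
        hvs (Ne.symm htv)
      ext y
      simp only [Finset.mem_insert, Finset.mem_singleton]
      tauto
    rw [hset]
    exact gp_awins _ _ (gp_insert ⟨f, hf⟩ huR hvR huv duv)
  · have haR : a ∈ R := (hRmem a).2 ⟨hat, hau, hav, has, ha⟩
    obtain ⟨hfa1, hfa2, hfa3, hfa4⟩ := hf a haR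
    obtain ⟨hfat, hfau, hfav, hfas, hfaM⟩ := (hRmem (f a)).1 hfa1
    refine ⟨f a, Finset.mem_erase.2 ⟨hfa2, hfaM⟩, ?_⟩
    have hsub2 : (M.erase a).erase (f a) ⊂ M :=
      Finset.ssubset_of_subset_of_ssubset (Finset.erase_subset _ _)
        (Finset.erase_ssubset ha)
    refine ih _ hsub2 ⟨t, u, v, s,
      Finset.mem_erase.2 ⟨Ne.symm hfat, Finset.mem_erase.2 ⟨Ne.symm hat, ht⟩⟩,
      Finset.mem_erase.2 ⟨Ne.symm hfau, Finset.mem_erase.2 ⟨Ne.symm hau, hu⟩⟩,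
      Finset.mem_erase.2 ⟨Ne.symm hfav, Finset.mem_erase.2 ⟨Ne.symm hav, hv⟩⟩,
      Finset.mem_erase.2 ⟨Ne.symm hfas, Finset.mem_erase.2 ⟨Ne.symm has, hs⟩⟩,
      htu, htv, hts, huv, hus, hvs, dtu, dtv, duv, ?_⟩
    have hseteq : (((((((M.erase a).erase (f a)).erase t).erase u).erase v).erase s) =
        (R.erase a).erase (f a)) := by
      ext y
      simp only [Finset.mem_erase, hRmem]
      tauto
    rw [hseteq]
    exact ⟨f, pairing_erase hf haR⟩

lemma start (d n a₀ : ℕ) (h1 : 1 ≤ a₀) (h2 : a₀ ≤ n) (h3 : 3 ≤ n)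
    (hw : AWins d false ((Finset.Icc 1 n).erase a₀)) : AWins d true (Finset.Icc 1 n) := by
  rw [AWins]
  have hc : (Finset.Icc 1 n).card = n := by rw [Nat.card_Icc]; omega
  rw [if_neg (by omega), if_pos rfl]
  exact ⟨a₀, Finset.mem_Icc.2 ⟨h1, h2⟩, hw⟩
theorem stmt_12 (d k n : ℕ) (hd : 7 ≤ d) (hde : Even d) (hk : 1 ≤ k)
    (hn : n = k * d - 1 ∨ n = (k + 1) * d + 1 ∨ n = (k + 3) * d - 3) :
    AWins d true (Finset.Icc 1 n) := by
  obtain ⟨e, he⟩ := hde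
  have he4 : 4 ≤ e := by omega
  rcases hn with rfl | rfl | rfl
  -- Case 1 : n = k*d - 1
  · have hK4 : 4 ≤ k * e := le_trans he4 (Nat.le_mul_of_pos_left e (by omega : 0 < k))
    have hkd : k * d = k * e + k * e := by rw [he]; ring
    rw [hkd]
    set K := k * e with hKdef
    refine start d _ K (by omega) (by omega) (by omega) ?_
    refine gp_awins _ _ ⟨fun x => K + K - x, ?_⟩
    intro x hx
    rw [Finset.mem_erase, Finset.mem_Icc] at hx
    dsimp only
    refine ⟨?_, by omega, by omega, ⟨k, ?_⟩⟩
    · rw [Finset.mem_erase, Finset.mem_Icc]; omega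
    · have h1 : x + (K + K - x) = K + K := by omega
      rw [h1, hKdef, he]; ring
  -- Case 2 : n = (k+1)*d + 1
  · rcases Nat.even_or_odd k with ⟨j, hj⟩ | ⟨j, hj⟩
    · -- k even : k = j + j, j ≥ 1
      have hj1 : 1 ≤ j := by omega
      have hWe : e ≤ j * e := Nat.le_mul_of_pos_left e (by omega : 0 < j)
      have hne : (k + 1) * d + 1 = (4 * (j * e) + 2 * e) + 1 := by rw [hj, he]; ring
      rw [hne]
      set W := j * e with hWdef
      refine start d _ (4 * W + 2 * e + 1) (by omega) (by omega) (by omega) ?_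
      refine ts_awins _ _ ⟨2 * W - e, 2 * W + e, 2 * W + 3 * e, 4 * W + 2 * e,
        ?_, ?_, ?_, ?_, by omega, by omega, by omega, by omega, by omega, by omega,
        ⟨2 * j, ?_⟩, ⟨2 * j + 1, ?_⟩, ⟨2 * j + 2, ?_⟩, ?_⟩
      · rw [Finset.mem_erase, Finset.mem_Icc]; omega
      · rw [Finset.mem_erase, Finset.mem_Icc]; omega
      · rw [Finset.mem_erase, Finset.mem_Icc]; omega
      · rw [Finset.mem_erase, Finset.mem_Icc]; omega
      · have h1 : (2 * W - e) + (2 * W + e) = 4 * W := by omega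
        rw [h1, hWdef, he]; ring
      · have h1 : (2 * W - e) + (2 * W + 3 * e) = 4 * W + 2 * e := by omega
        rw [h1, hWdef, he]; ring
      · have h1 : (2 * W + e) + (2 * W + 3 * e) = 4 * W + 4 * e := by omega
        rw [h1, hWdef, he]; ring
      · refine ⟨fun x => 4 * W + 2 * e - x, ?_⟩
        intro x hx
        simp only [Finset.mem_erase, Finset.mem_Icc] at hx
        dsimp only
        refine ⟨?_, by omega, by omega, ⟨2 * j + 1, ?_⟩⟩
        · simp only [Finset.mem_erase, Finset.mem_Icc]; omega
        · have h1 : x + (4 * W + 2 * e - x) = 4 * W + 2 * e := by omega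
          rw [h1, hWdef, he]; ring
    · -- k odd : k = 2*j + 1
      have hne : (k + 1) * d + 1 = (4 * (j * e) + 4 * e) + 1 := by rw [hj, he]; ring
      rw [hne]
      set W := j * e with hWdef
      refine start d _ (4 * W + 4 * e + 1) (by omega) (by omega) (by omega) ?_
      refine gp_awins _ _ ⟨fun x => if x = 4 * W + 4 * e then 2 * W + 2 * e
        else if x = 2 * W + 2 * e then 4 * W + 4 * e else 4 * W + 4 * e - x, ?_⟩
      intro x hx
      rw [Finset.mem_erase, Finset.mem_Icc] at hx
      dsimp only
      by_cases h1 : x = 4 * W + 4 * e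
      · rw [h1, if_pos rfl, if_neg (by omega : ¬ (2 * W + 2 * e = 4 * W + 4 * e)),
          if_pos rfl]
        refine ⟨?_, by omega, rfl, ⟨3 * j + 3, ?_⟩⟩
        · rw [Finset.mem_erase, Finset.mem_Icc]; omega
        · have h2 : (4 * W + 4 * e) + (2 * W + 2 * e) = 6 * W + 6 * e := by omega
          rw [h2, hWdef, he]; ring
      by_cases h2 : x = 2 * W + 2 * e
      · rw [h2, if_neg (by omega : ¬ (2 * W + 2 * e = 4 * W + 4 * e)), if_pos rfl,
          if_pos rfl]
        refine ⟨?_, by omega, rfl, ⟨3 * j + 3, ?_⟩⟩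
        · rw [Finset.mem_erase, Finset.mem_Icc]; omega
        · have h3 : (2 * W + 2 * e) + (4 * W + 4 * e) = 6 * W + 6 * e := by omega
          rw [h3, hWdef, he]; ring
      · rw [if_neg h1, if_neg h2,
          if_neg (by omega : ¬ (4 * W + 4 * e - x = 4 * W + 4 * e)),
          if_neg (by omega : ¬ (4 * W + 4 * e - x = 2 * W + 2 * e))]
        refine ⟨?_, by omega, by omega, ⟨2 * j + 2, ?_⟩⟩
        · rw [Finset.mem_erase, Finset.mem_Icc]; omega
        · have h3 : x + (4 * W + 4 * e - x) = 4 * W + 4 * e := by omega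
          rw [h3, hWdef, he]; ring
  -- Case 3 : n = (k+3)*d - 3
  · have hWe : e ≤ k * e := Nat.le_mul_of_pos_left e (by omega : 0 < k)
    have h0 : (k + 3) * d = 2 * (k * e) + 6 * e := by rw [he]; ring
    have hne : (k + 3) * d - 3 = 2 * (k * e) + 6 * e - 3 := by omega
    rw [hne]
    set W := k * e with hWdef
    refine start d _ 2 (by omega) (by omega) (by omega) ?_
    refine ts_awins _ _ ⟨W + e, W + 3 * e, W + 5 * e, 1,
      ?_, ?_, ?_, ?_, by omega, by omega, by omega, by omega, by omega, by omega,
      ⟨k + 2, ?_⟩, ⟨k + 3, ?_⟩, ⟨k + 4, ?_⟩, ?_⟩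
    · rw [Finset.mem_erase, Finset.mem_Icc]; omega
    · rw [Finset.mem_erase, Finset.mem_Icc]; omega
    · rw [Finset.mem_erase, Finset.mem_Icc]; omega
    · rw [Finset.mem_erase, Finset.mem_Icc]; omega
    · have h1 : (W + e) + (W + 3 * e) = 2 * W + 4 * e := by omega
      rw [h1, hWdef, he]; ring
    · have h1 : (W + e) + (W + 5 * e) = 2 * W + 6 * e := by omega
      rw [h1, hWdef, he]; ring
    · have h1 : (W + 3 * e) + (W + 5 * e) = 2 * W + 8 * e := by omega
      rw [h1, hWdef, he]; ring
    · refine ⟨fun x => 2 * W + 6 * e - x, ?_⟩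
      intro x hx
      simp only [Finset.mem_erase, Finset.mem_Icc] at hx
      dsimp only
      refine ⟨?_, by omega, by omega, ⟨k + 3, ?_⟩⟩
      · simp only [Finset.mem_erase, Finset.mem_Icc]; omega
      · have h1 : x + (2 * W + 6 * e - x) = 2 * W + 6 * e := by omega
        rw [h1, hWdef, he]; ring
end

section
/- Let d ≥ 7 be odd and let k ≥ 1. Then Player A can force a win in the game Z(n, d) for every n ∈ {(2k−1)·d − 2, (2k−1)·d, 2kd − 1, 2kd + 1, (2k+1)·d + 2, 2(k+1)·d − 3}. -/
lemma even_card_of_fpf (f : ℕ → ℕ) :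
    ∀ (P : Finset ℕ), (∀ x ∈ P, f x ∈ P ∧ f (f x) = x ∧ f x ≠ x) → Even P.card := by
  intro P
  induction P using Finset.strongInduction with
  | _ P ih =>
    intro hf
    rcases P.eq_empty_or_nonempty with rfl | ⟨x, hx⟩
    · simp
    · obtain ⟨hfx, hffx, hne⟩ := hf x hx
      set P' := (P.erase x).erase (f x) with hP'
      have hsub : P' ⊂ P := by
        apply Finset.ssubset_of_subset_of_ssubset (Finset.erase_subset _ _)
        exact Finset.erase_ssubset hx
      have hmem : f x ∈ P.erase x := Finset.mem_erase.mpr ⟨hne, hfx⟩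
      have hcard : P.card = P'.card + 2 := by
        rw [hP', Finset.card_erase_of_mem hmem, Finset.card_erase_of_mem hx]
        have h2 : 2 ≤ P.card := by
          have := Finset.card_le_card (show {x, f x} ⊆ P by
            intro t ht; simp at ht; rcases ht with rfl | rfl <;> assumption)
          rwa [Finset.card_insert_of_notMem (by simp [hne.symm]),
            Finset.card_singleton] at this
        omega
      have hres : ∀ y ∈ P', f y ∈ P' ∧ f (f y) = y ∧ f y ≠ y := by
        intro y hy
        have hy1 : y ∈ P := Finset.mem_of_mem_erase (Finset.mem_of_mem_erase hy)
        obtain ⟨h1, h2, h3⟩ := hf y hy1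
        refine ⟨?_, h2, h3⟩
        simp only [hP', Finset.mem_erase] at hy ⊢
        refine ⟨?_, ?_, h1⟩
        · intro hc; apply hy.2.1; rw [← h2, hc, hffx]
        · intro hc; apply hy.1; rw [← h2, hc]
      have := ih P' hsub hres
      rw [hcard]
      rcases this with ⟨r, hr⟩
      exact ⟨r + 1, by omega⟩

lemma combine (d : ℕ) : ∀ (n : ℕ) (P D : Finset ℕ) (f : ℕ → ℕ),
    (P ∪ D).card ≤ n → Disjoint P D →
    (∀ x ∈ P, f x ∈ P ∧ f (f x) = x ∧ f x ≠ x ∧ d ∣ x + f x) →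
    Even D.card → AWins d false D → AWins d false (P ∪ D) := by
  intro n
  induction n with
  | zero =>
    intro P D f hcard _ _ _ _
    have : P ∪ D = ∅ := Finset.card_eq_zero.mp (Nat.le_zero.mp hcard)
    rw [this, AWins]
    simp
  | succ n ih =>
    intro P D f hcard hdisj hf hDeven hD
    have hfP : ∀ x ∈ P, f x ∈ P ∧ f (f x) = x ∧ f x ≠ x := fun x hx =>
      ⟨(hf x hx).1, (hf x hx).2.1, (hf x hx).2.2.1⟩
    have hPeven := even_card_of_fpf f P hfP
    have hUeven : Even (P ∪ D).card := by
      rw [Finset.card_union_of_disjoint hdisj]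
      exact hPeven.add hDeven
    rw [AWins]
    by_cases hle : (P ∪ D).card ≤ 2
    · rw [if_pos hle]
      rcases P.eq_empty_or_nonempty with rfl | ⟨x, hx⟩
      · rw [Finset.empty_union] at hle ⊢
        rw [AWins, if_pos hle] at hD
        exact hD
      · obtain ⟨hfx, hffx, hne, hdvd⟩ := hf x hx
        have hsub : {x, f x} ⊆ P ∪ D := by
          intro t ht; simp at ht
          rcases ht with rfl | rfl <;> exact Finset.mem_union_left _ (by assumption)
        have hc2 : ({x, f x} : Finset ℕ).card = 2 := by
          rw [Finset.card_insert_of_notMem (by simp [hne.symm]), Finset.card_singleton]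
        have heq : P ∪ D = {x, f x} :=
          (Finset.eq_of_subset_of_card_le hsub (by omega)).symm
        rw [heq, Finset.sum_pair hne.symm]
        simpa using hdvd
    · rw [if_neg hle]
      simp only [Bool.false_eq_true, if_false]
      intro b hb
      -- card (P ∪ D) ≥ 4 since even and > 2
      have hc4 : 4 ≤ (P ∪ D).card := by
        rcases hUeven with ⟨r, hr⟩; omega
      rw [AWins]
      have hcerase : ((P ∪ D).erase b).card = (P ∪ D).card - 1 :=
        Finset.card_erase_of_mem hb
      rw [if_neg (by omega), if_pos rfl]
      rcases Finset.mem_union.mp hb with hbP | hbD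
      · -- B removed from P; A removes f b
        obtain ⟨hfb, hffb, hne, _⟩ := hf b hbP
        refine ⟨f b, Finset.mem_erase.mpr ⟨hne, Finset.mem_union_left _ hfb⟩, ?_⟩
        have hset : ((P ∪ D).erase b).erase (f b) =
            ((P.erase b).erase (f b)) ∪ D := by
          rw [Finset.erase_union_distrib, Finset.erase_union_distrib,
            Finset.erase_eq_of_notMem (Finset.disjoint_left.mp hdisj hbP),
            Finset.erase_eq_of_notMem (Finset.disjoint_left.mp hdisj hfb)]
        rw [hset]
        have hsub : (P.erase b).erase (f b) ⊆ P := by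
          intro t ht; exact Finset.mem_of_mem_erase (Finset.mem_of_mem_erase ht)
        apply ih _ D f ?_ (hdisj.mono_left hsub) ?_ hDeven hD
        · have h1 : f b ∈ P.erase b := Finset.mem_erase.mpr ⟨hne, hfb⟩
          have : (((P.erase b).erase (f b)) ∪ D).card + 2 ≤ (P ∪ D).card + 1 := by
            rw [Finset.card_union_of_disjoint (hdisj.mono_left hsub),
              Finset.card_union_of_disjoint hdisj,
              Finset.card_erase_of_mem h1, Finset.card_erase_of_mem hbP]
            have : 2 ≤ P.card := by
              have := Finset.card_le_card (show {b, f b} ⊆ P by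
                intro t ht; simp at ht; rcases ht with rfl | rfl <;> assumption)
              rwa [Finset.card_insert_of_notMem (by simp [Ne.symm hne]),
                Finset.card_singleton] at this
            omega
          omega
        · intro y hy
          have hy1 : y ∈ P := hsub hy
          obtain ⟨h1, h2, h3, h4⟩ := hf y hy1
          refine ⟨?_, h2, h3, h4⟩
          simp only [Finset.mem_erase] at hy ⊢
          refine ⟨?_, ?_, h1⟩
          · intro hc; apply hy.2.1; rw [← h2, hc, hffb]
          · intro hc; apply hy.1; rw [← h2, hc]
      · -- B removed from D
        by_cases hD2 : D.card ≤ 2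
        · -- D.card = 2; A removes the other element of D
          have hD2' : D.card = 2 := by
            rcases hDeven with ⟨r, hr⟩
            have : 1 ≤ D.card := Finset.card_pos.mpr ⟨b, hbD⟩
            omega
          obtain ⟨c, hc⟩ : (D.erase b).Nonempty := by
            rw [← Finset.card_pos, Finset.card_erase_of_mem hbD]; omega
          have hcb : c ≠ b := (Finset.mem_erase.mp hc).1
          have hcD : c ∈ D := (Finset.mem_erase.mp hc).2
          refine ⟨c, Finset.mem_erase.mpr ⟨hcb, Finset.mem_union_right _ hcD⟩, ?_⟩
          have hDbc : (D.erase b).erase c = ∅ := by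
            apply Finset.card_eq_zero.mp
            rw [Finset.card_erase_of_mem hc, Finset.card_erase_of_mem hbD, hD2']
          have hset : ((P ∪ D).erase b).erase c = P ∪ ∅ := by
            rw [Finset.erase_union_distrib, Finset.erase_union_distrib,
              Finset.erase_eq_of_notMem (Finset.disjoint_right.mp hdisj hbD),
              Finset.erase_eq_of_notMem (Finset.disjoint_right.mp hdisj hcD), hDbc]
          rw [hset]
          apply ih _ ∅ f ?_ (Finset.disjoint_empty_right _) hf (by simp) ?_
          · rw [Finset.union_empty]
            rw [Finset.card_union_of_disjoint hdisj, hD2'] at hcard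
            omega
          · rw [AWins]; simp
        · -- D.card ≥ 4; use hD
          rw [AWins, if_neg hD2] at hD
          simp only [Bool.false_eq_true, if_false] at hD
          have hDb := hD b hbD
          rw [AWins] at hDb
          have h4 : 4 ≤ D.card := by rcases hDeven with ⟨r, hr⟩; omega
          have : ¬ (D.erase b).card ≤ 2 := by
            rw [Finset.card_erase_of_mem hbD]; omega
          rw [if_neg this, if_pos rfl] at hDb
          obtain ⟨a, ha, hwin⟩ := hDb
          have hab : a ≠ b := (Finset.mem_erase.mp ha).1
          have haD : a ∈ D := (Finset.mem_erase.mp ha).2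
          refine ⟨a, Finset.mem_erase.mpr ⟨hab, Finset.mem_union_right _ haD⟩, ?_⟩
          have hset : ((P ∪ D).erase b).erase a = P ∪ ((D.erase b).erase a) := by
            rw [Finset.erase_union_distrib, Finset.erase_union_distrib,
              Finset.erase_eq_of_notMem (Finset.disjoint_right.mp hdisj hbD),
              Finset.erase_eq_of_notMem (Finset.disjoint_right.mp hdisj haD)]
          rw [hset]
          apply ih _ _ f ?_ ?_ hf ?_ hwin
          · have : (P ∪ (D.erase b).erase a).card + 2 ≤ (P ∪ D).card + 1 := by
              rw [Finset.card_union_of_disjoint hdisj,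
                Finset.card_union_of_disjoint (hdisj.mono_right (fun t ht =>
                  Finset.mem_of_mem_erase (Finset.mem_of_mem_erase ht))),
                Finset.card_erase_of_mem ha, Finset.card_erase_of_mem hbD]
              omega
            omega
          · exact hdisj.mono_right (fun t ht =>
              Finset.mem_of_mem_erase (Finset.mem_of_mem_erase ht))
          · rcases hDeven with ⟨r, hr⟩
            refine ⟨r - 1, ?_⟩
            rw [Finset.card_erase_of_mem ha, Finset.card_erase_of_mem hbD]
            omega

lemma pairwin (d p q : ℕ) (hpq : p ≠ q) (hdvd : d ∣ p + q) : AWins d false {p, q} := by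
  rw [AWins, if_pos (by rw [Finset.card_insert_of_notMem (by simp [hpq]),
    Finset.card_singleton]), Finset.sum_pair hpq]
  exact hdvd

lemma defect (d x y z w : ℕ) (hxy : x ≠ y) (hxz : x ≠ z) (hxw : x ≠ w)
    (hyz : y ≠ z) (hyw : y ≠ w) (hzw : z ≠ w)
    (h1 : d ∣ x + y) (h2 : d ∣ x + z) (h3 : d ∣ y + z) :
    AWins d false {x, y, z, w} := by
  have hc : ({x, y, z, w} : Finset ℕ).card = 4 := by
    rw [Finset.card_insert_of_notMem (by simp [hxy, hxz, hxw]),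
      Finset.card_insert_of_notMem (by simp [hyz, hyw]),
      Finset.card_insert_of_notMem (by simp [hzw]), Finset.card_singleton]
  rw [AWins, if_neg (by omega)]
  simp only [Bool.false_eq_true, if_false]
  intro b hb
  have hc3 : ∀ b ∈ ({x, y, z, w} : Finset ℕ),
      (({x, y, z, w} : Finset ℕ).erase b).card = 3 := by
    intro b hb; rw [Finset.card_erase_of_mem hb, hc]
  rw [AWins, if_neg (by rw [hc3 b hb]; omega), if_pos rfl]
  simp only [Finset.mem_insert, Finset.mem_singleton] at hb
  rcases hb with rfl | rfl | rfl | rfl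
  · refine ⟨w, by simp [Ne.symm hxw, Ne.symm hyw, Ne.symm hzw], ?_⟩
    have : ((({b, y, z, w} : Finset ℕ).erase b).erase w) = {y, z} := by
      ext t
      simp only [Finset.mem_erase, Finset.mem_insert, Finset.mem_singleton]
      constructor
      · rintro ⟨h1, h2, rfl | rfl | rfl | rfl⟩ <;> tauto
      · rintro (rfl | rfl) <;> exact ⟨by omega, by omega, by simp⟩
    rw [this]; exact pairwin d y z hyz h3
  · refine ⟨w, by simp [Ne.symm hxw, Ne.symm hyw, Ne.symm hzw, hxy], ?_⟩
    have : ((({x, b, z, w} : Finset ℕ).erase b).erase w) = {x, z} := by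
      ext t
      simp only [Finset.mem_erase, Finset.mem_insert, Finset.mem_singleton]
      constructor
      · rintro ⟨h1, h2, rfl | rfl | rfl | rfl⟩ <;> tauto
      · rintro (rfl | rfl) <;> exact ⟨by omega, by omega, by simp⟩
    rw [this]; exact pairwin d x z hxz h2
  · refine ⟨w, by simp [Ne.symm hxw, Ne.symm hyw, Ne.symm hzw, hxz, hyz], ?_⟩
    have : ((({x, y, b, w} : Finset ℕ).erase b).erase w) = {x, y} := by
      ext t
      simp only [Finset.mem_erase, Finset.mem_insert, Finset.mem_singleton]
      constructor
      · rintro ⟨h1, h2, rfl | rfl | rfl | rfl⟩ <;> tauto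
      · rintro (rfl | rfl) <;> exact ⟨by omega, by omega, by simp⟩
    rw [this]; exact pairwin d x y hxy h1
  · refine ⟨z, by simp [hxw, hyw, hzw, Ne.symm hxz, Ne.symm hyz], ?_⟩
    have : ((({x, y, z, b} : Finset ℕ).erase b).erase z) = {x, y} := by
      ext t
      simp only [Finset.mem_erase, Finset.mem_insert, Finset.mem_singleton]
      constructor
      · rintro ⟨h1, h2, rfl | rfl | rfl | rfl⟩ <;> tauto
      · rintro (rfl | rfl) <;> exact ⟨by omega, by omega, by simp⟩
    rw [this]; exact pairwin d x y hxy h1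

lemma win_of_erase (d n a : ℕ) (h3 : 3 ≤ n) (ha : a ∈ Finset.Icc 1 n)
    (h : AWins d false ((Finset.Icc 1 n).erase a)) : AWins d true (Finset.Icc 1 n) := by
  rw [AWins, if_neg (by rw [Nat.card_Icc]; omega), if_pos rfl]
  exact ⟨a, ha, h⟩

lemma emptyD (d : ℕ) : AWins d false (∅ : Finset ℕ) := by rw [AWins]; simp

lemma case1 (d m : ℕ) (hd : 7 ≤ d) (hd2 : d % 2 = 1) (hdm : d ∣ m) (hm : d ≤ m) :
    AWins d true (Finset.Icc 1 (2*m - d - 2)) := by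
  have hdd : d ∣ 2 * m := hdm.mul_left 2
  apply win_of_erase d _ 1 (by omega) (by simp only [Finset.mem_Icc]; omega)
  have hset : (Finset.Icc 1 (2*m-d-2)).erase 1 = Finset.Icc 2 (2*m-d-2) ∪ ∅ := by
    ext t; simp only [Finset.mem_erase, Finset.mem_Icc, Finset.union_empty]; omega
  rw [hset]
  apply combine d _ _ _ (fun x => 2*m - d - x) le_rfl (by simp) ?_ (by simp) (emptyD d)
  intro x hx
  simp only [Finset.mem_Icc] at hx
  refine ⟨by simp only [Finset.mem_Icc]; omega, by omega, by omega, ?_⟩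
  rw [show x + (2*m - d - x) = 2*m - d from by omega]
  exact Nat.dvd_sub hdd dvd_rfl

lemma case2 (d m : ℕ) (hd : 7 ≤ d) (hd2 : d % 2 = 1) (hdm : d ∣ m) (hm : d ≤ m) :
    AWins d true (Finset.Icc 1 (2*m - d)) := by
  have hdd : d ∣ 2 * m := hdm.mul_left 2
  apply win_of_erase d _ (2*m - d) (by omega) (by simp only [Finset.mem_Icc]; omega)
  have hset : (Finset.Icc 1 (2*m-d)).erase (2*m-d) = Finset.Icc 1 (2*m-d-1) ∪ ∅ := by
    ext t; simp only [Finset.mem_erase, Finset.mem_Icc, Finset.union_empty]; omega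
  rw [hset]
  apply combine d _ _ _ (fun x => 2*m - d - x) le_rfl (by simp) ?_ (by simp) (emptyD d)
  intro x hx
  simp only [Finset.mem_Icc] at hx
  refine ⟨by simp only [Finset.mem_Icc]; omega, by omega, by omega, ?_⟩
  rw [show x + (2*m - d - x) = 2*m - d from by omega]
  exact Nat.dvd_sub hdd dvd_rfl

lemma case3 (d m : ℕ) (hd : 7 ≤ d) (hd2 : d % 2 = 1) (hdm : d ∣ m) (hm : d ≤ m) :
    AWins d true (Finset.Icc 1 (2*m - 1)) := by
  have hdd : d ∣ 2 * m := hdm.mul_left 2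
  apply win_of_erase d _ m (by omega) (by simp only [Finset.mem_Icc]; omega)
  have hset : (Finset.Icc 1 (2*m-1)).erase m = ((Finset.Icc 1 (2*m-1)).erase m) ∪ ∅ := by
    simp
  rw [hset]
  apply combine d _ _ _ (fun x => 2*m - x) le_rfl (by simp) ?_ (by simp) (emptyD d)
  intro x hx
  simp only [Finset.mem_erase, Finset.mem_Icc] at hx
  refine ⟨by simp only [Finset.mem_erase, Finset.mem_Icc]; omega, by omega, by omega, ?_⟩
  rw [show x + (2*m - x) = 2*m from by omega]
  exact hdd

lemma case4 (d m : ℕ) (hd : 7 ≤ d) (hd2 : d % 2 = 1) (hdm : d ∣ m) (hm : d ≤ m) :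
    AWins d true (Finset.Icc 1 (2*m + 1)) := by
  have hdd : d ∣ 2 * m := hdm.mul_left 2
  apply win_of_erase d _ (2*m+1) (by omega) (by simp only [Finset.mem_Icc]; omega)
  have hset : (Finset.Icc 1 (2*m+1)).erase (2*m+1) = Finset.Icc 1 (2*m) ∪ ∅ := by
    ext t; simp only [Finset.mem_erase, Finset.mem_Icc, Finset.union_empty]; omega
  rw [hset]
  apply combine d _ _ _ (fun x => if x < d then d - x else 2*m + d - x) le_rfl
    (by simp) ?_ (by simp) (emptyD d)
  intro x hx
  simp only [Finset.mem_Icc] at hx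
  by_cases h : x < d
  · rw [if_pos h, if_pos (show d - x < d from by omega)]
    refine ⟨by simp only [Finset.mem_Icc]; omega, by omega, by omega, ?_⟩
    rw [show x + (d - x) = d from by omega]
  · rw [if_neg h, if_neg (show ¬ (2*m + d - x < d) from by omega)]
    refine ⟨by simp only [Finset.mem_Icc]; omega, by omega, by omega, ?_⟩
    rw [show x + (2*m + d - x) = 2*m + d from by omega]
    exact dvd_add hdd dvd_rfl

lemma defectD (d m : ℕ) (hd : 7 ≤ d) (hdm : d ∣ m) (hm : d ≤ m) :
    AWins d false ({d, 2*m, 2*m+d, 2*m+d+2} : Finset ℕ) := by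
  have hdd : d ∣ 2 * m := hdm.mul_left 2
  apply defect d _ _ _ _ (by omega) (by omega) (by omega) (by omega) (by omega) (by omega)
  · exact dvd_add dvd_rfl hdd
  · rw [show d + (2*m+d) = 2*m + 2*d from by ring]
    exact dvd_add hdd ⟨2, by ring⟩
  · rw [show 2*m + (2*m+d) = 2*(2*m) + d from by ring]
    exact dvd_add (hdd.mul_left 2) dvd_rfl

lemma cardD (d m : ℕ) (hd : 7 ≤ d) (hm : d ≤ m) :
    ({d, 2*m, 2*m+d, 2*m+d+2} : Finset ℕ).card = 4 := by
  rw [Finset.card_insert_of_notMem (by simp only [Finset.mem_insert, Finset.mem_singleton]; omega),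
    Finset.card_insert_of_notMem (by simp only [Finset.mem_insert, Finset.mem_singleton]; omega),
    Finset.card_insert_of_notMem (by simp only [Finset.mem_singleton]; omega),
    Finset.card_singleton]

lemma case5 (d m : ℕ) (hd : 7 ≤ d) (hd2 : d % 2 = 1) (hdm : d ∣ m) (hm : d ≤ m) :
    AWins d true (Finset.Icc 1 (2*m + d + 2)) := by
  have hdd : d ∣ 2 * m := hdm.mul_left 2
  apply win_of_erase d _ (2*m+d+1) (by omega) (by simp only [Finset.mem_Icc]; omega)
  have hset : (Finset.Icc 1 (2*m+d+2)).erase (2*m+d+1) =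
      (((Finset.Icc 1 (2*m+d-1)).erase d).erase (2*m)) ∪ {d, 2*m, 2*m+d, 2*m+d+2} := by
    ext t
    simp only [Finset.mem_erase, Finset.mem_Icc, Finset.mem_union, Finset.mem_insert,
      Finset.mem_singleton]
    omega
  rw [hset]
  apply combine d _ _ _ (fun x => 2*m + d - x) le_rfl ?_ ?_
    (by rw [cardD d m hd hm]; exact ⟨2, rfl⟩) (defectD d m hd hdm hm)
  · rw [Finset.disjoint_left]
    intro t ht htD
    simp only [Finset.mem_erase, Finset.mem_Icc] at ht
    simp only [Finset.mem_insert, Finset.mem_singleton] at htD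
    omega
  · intro x hx
    simp only [Finset.mem_erase, Finset.mem_Icc] at hx
    refine ⟨by simp only [Finset.mem_erase, Finset.mem_Icc]; omega, by omega, by omega, ?_⟩
    rw [show x + (2*m + d - x) = 2*m + d from by omega]
    exact dvd_add hdd dvd_rfl

lemma case6 (d m : ℕ) (hd : 7 ≤ d) (hd2 : d % 2 = 1) (hdm : d ∣ m) (hm : d ≤ m) :
    AWins d true (Finset.Icc 1 (2*m + 2*d - 3)) := by
  have hdd : d ∣ 2 * m := hdm.mul_left 2
  apply win_of_erase d _ (2*m+d+1) (by omega) (by simp only [Finset.mem_Icc]; omega)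
  have hset : (Finset.Icc 1 (2*m+2*d-3)).erase (2*m+d+1) =
      ((((Finset.Icc 1 (2*m+d-1)).erase d).erase (2*m)) ∪
        Finset.Icc (2*m+d+3) (2*m+2*d-3)) ∪ {d, 2*m, 2*m+d, 2*m+d+2} := by
    ext t
    simp only [Finset.mem_erase, Finset.mem_Icc, Finset.mem_union, Finset.mem_insert,
      Finset.mem_singleton]
    omega
  rw [hset]
  apply combine d _ _ _ (fun x => if x < 2*m+d then 2*m + d - x else 4*m + 3*d - x) le_rfl ?_ ?_
    (by rw [cardD d m hd hm]; exact ⟨2, rfl⟩) (defectD d m hd hdm hm)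
  · rw [Finset.disjoint_left]
    intro t ht htD
    simp only [Finset.mem_union, Finset.mem_erase, Finset.mem_Icc] at ht
    simp only [Finset.mem_insert, Finset.mem_singleton] at htD
    omega
  · intro x hx
    simp only [Finset.mem_union, Finset.mem_erase, Finset.mem_Icc] at hx
    by_cases h : x < 2*m+d
    · rw [if_pos h, if_pos (show 2*m + d - x < 2*m+d from by omega)]
      refine ⟨?_, by omega, by omega, ?_⟩
      · simp only [Finset.mem_union, Finset.mem_erase, Finset.mem_Icc]
        omega
      · rw [show x + (2*m + d - x) = 2*m + d from by omega]
        exact dvd_add hdd dvd_rfl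
    · rw [if_neg h, if_neg (show ¬ (4*m + 3*d - x < 2*m+d) from by omega)]
      refine ⟨?_, by omega, by omega, ?_⟩
      · simp only [Finset.mem_union, Finset.mem_erase, Finset.mem_Icc]
        omega
      · rw [show x + (4*m + 3*d - x) = 4*m + 3*d from by omega]
        exact dvd_add (hdm.mul_left 4) ⟨3, by ring⟩

theorem stmt_13 (d k n : ℕ) (hd : 7 ≤ d) (hdo : Odd d) (hk : 1 ≤ k)
    (hn : n = (2 * k - 1) * d - 2 ∨ n = (2 * k - 1) * d ∨
      n = 2 * k * d - 1 ∨ n = 2 * k * d + 1 ∨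
      n = (2 * k + 1) * d + 2 ∨ n = (k + 1) * (2 * d) - 3) :
    AWins d true (Finset.Icc 1 n) := by
  have hd2 : d % 2 = 1 := Nat.odd_iff.mp hdo
  have hdm : d ∣ k * d := ⟨k, mul_comm k d⟩
  have hm : d ≤ k * d := Nat.le_mul_of_pos_left d hk
  rcases hn with rfl | rfl | rfl | rfl | rfl | rfl
  · rw [show (2*k-1)*d - 2 = 2*(k*d) - d - 2 from by rw [Nat.sub_mul, one_mul, mul_assoc]]
    exact case1 d (k*d) hd hd2 hdm hm
  · rw [show (2*k-1)*d = 2*(k*d) - d from by rw [Nat.sub_mul, one_mul, mul_assoc]]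
    exact case2 d (k*d) hd hd2 hdm hm
  · rw [show 2*k*d - 1 = 2*(k*d) - 1 from by rw [mul_assoc]]
    exact case3 d (k*d) hd hd2 hdm hm
  · rw [show 2*k*d + 1 = 2*(k*d) + 1 from by rw [mul_assoc]]
    exact case4 d (k*d) hd hd2 hdm hm
  · rw [show (2*k+1)*d + 2 = 2*(k*d) + d + 2 from by rw [add_mul, one_mul, mul_assoc]]
    exact case5 d (k*d) hd hd2 hdm hm
  · rw [show (k+1)*(2*d) - 3 = 2*(k*d) + 2*d - 3 from by rw [add_mul, one_mul]; ring_nf]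
    exact case6 d (k*d) hd hd2 hdm hm
end

section
/- Let n ≥ 5 be odd. Then Player B can force a win in the game Z(n, d) for every d with (n+3)/2 ≤ d ≤ n − 1. -/
/-- `BWins d turn M` : in the crossing-out game with divisor `d`, current board
`M`, and `turn = true` iff Player A is the one to move (`false` : Player B),
Player B can force a win. Players alternately remove one number from the board
until two numbers remain; B wins iff `d` does not divide the sum of those two
numbers. -/
def BWins (d : ℕ) (turn : Bool) (M : Finset ℕ) : Prop :=
  if M.card ≤ 2 then ¬ d ∣ M.sum id
  else if turn then ∀ a, a ∈ M → BWins d false (M.erase a)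
  else ∃ a, ∃ _ : a ∈ M, BWins d true (M.erase a)
termination_by M.card
decreasing_by
  · exact Finset.card_erase_lt_of_mem ‹_›
  · exact Finset.card_erase_lt_of_mem ‹_›

/-- No two distinct elements of `I` sum to a multiple of `d`. -/
def IndepZ (d : ℕ) (I : Finset ℕ) : Prop :=
  ∀ x ∈ I, ∀ y ∈ I, x ≠ y → ¬ d ∣ (x + y)

lemma IndepZ.mono {d : ℕ} {I J : Finset ℕ} (h : IndepZ d I) (hJ : J ⊆ I) : IndepZ d J :=
  fun x hx y hy hxy => h x (hJ hx) y (hJ hy) hxy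

/-- Key strategy lemma: if the board contains an independent set that is large
enough, B can force a win. -/
lemma key_s15 (d : ℕ) : ∀ k (M I : Finset ℕ), M.card = k → I ⊆ M → IndepZ d I →
    (k % 2 = 1 → k + 3 ≤ 2 * I.card → BWins d true M) ∧
    (k % 2 = 0 → k + 2 ≤ 2 * I.card → BWins d false M) := by
  intro k
  induction k using Nat.strong_induction_on with
  | _ k ih =>
    intro M I hcard hsub hind
    have hIM : I.card ≤ M.card := Finset.card_le_card hsub
    constructor
    · intro hodd hle
      have h2 : ¬ M.card ≤ 2 := by omega
      rw [BWins, if_neg h2, if_pos rfl]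
      intro a ha
      have hMe : (M.erase a).card = k - 1 := by
        rw [Finset.card_erase_of_mem ha]; omega
      have hIe : I.card - 1 ≤ (I.erase a).card := Finset.pred_card_le_card_erase
      exact (ih (k-1) (by omega) (M.erase a) (I.erase a) hMe
        (Finset.erase_subset_erase a hsub)
        (hind.mono (Finset.erase_subset a I))).2 (by omega) (by omega)
    · intro heven hle
      by_cases h2 : M.card ≤ 2
      · rw [BWins, if_pos h2]
        have hk2 : k = 2 := by omega
        have hMI : M = I := (Finset.eq_of_subset_of_card_le hsub (by omega)).symm
        obtain ⟨x, y, hxy, hM⟩ := Finset.card_eq_two.mp (by omega : M.card = 2)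
        have hx : x ∈ I := by rw [← hMI, hM]; simp
        have hy : y ∈ I := by rw [← hMI, hM]; simp
        have : M.sum id = x + y := by rw [hM, Finset.sum_pair hxy]; rfl
        rw [this]
        exact hind x hx y hy hxy
      · rw [BWins, if_neg h2]
        simp only [Bool.false_eq_true, if_false]
        by_cases hMI : M ⊆ I
        · -- M = I
          have hMI' : M = I := Finset.Subset.antisymm hMI hsub
          obtain ⟨a, ha⟩ : M.Nonempty := Finset.card_pos.mp (by omega)
          refine ⟨a, ha, ?_⟩
          have hMe : (M.erase a).card = k - 1 := by
            rw [Finset.card_erase_of_mem ha]; omega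
          have hIe : (I.erase a).card = I.card - 1 := by
            rw [Finset.card_erase_of_mem (hMI' ▸ ha)]
          have hIk : I.card = k := by rw [← hMI']; exact hcard
          exact (ih (k-1) (by omega) (M.erase a) (I.erase a) hMe
            (Finset.erase_subset_erase a hsub)
            (hind.mono (Finset.erase_subset a I))).1 (by omega) (by omega)
        · obtain ⟨a, haM, haI⟩ := Finset.not_subset.mp hMI
          refine ⟨a, haM, ?_⟩
          have hMe : (M.erase a).card = k - 1 := by
            rw [Finset.card_erase_of_mem haM]; omega
          exact (ih (k-1) (by omega) (M.erase a) I hMe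
            (Finset.subset_erase.mpr ⟨hsub, haI⟩) hind).1 (by omega) (by omega)

theorem stmt_15 (n d : ℕ) (hn : Odd n) (h5 : 5 ≤ n)
    (hd1 : (n + 3) / 2 ≤ d) (hd2 : d ≤ n - 1) :
    BWins d true (Finset.Icc 1 n) := by
  obtain ⟨p, hp⟩ := hn
  have hn2 : n % 2 = 1 := by omega
  have hd1' : n + 3 ≤ 2 * d := by omega
  have hd2' : d + 1 ≤ n := by omega
  set t : ℕ := min (n - d) ((d - 1) / 2) with ht
  set I : Finset ℕ := Finset.Icc 1 (d / 2) ∪ Finset.Icc d (d + t) with hI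
  have hsub : I ⊆ Finset.Icc 1 n := by
    apply Finset.union_subset
    · exact Finset.Icc_subset_Icc le_rfl (by omega)
    · exact Finset.Icc_subset_Icc (by omega) (by omega)
  have hmem : ∀ x ∈ I, (1 ≤ x ∧ x ≤ d / 2) ∨ (d ≤ x ∧ x ≤ d + (d - 1) / 2) := by
    intro x hx
    rcases Finset.mem_union.mp hx with h | h
    · left; exact ⟨(Finset.mem_Icc.mp h).1, (Finset.mem_Icc.mp h).2⟩
    · right
      refine ⟨(Finset.mem_Icc.mp h).1, ?_⟩
      have := (Finset.mem_Icc.mp h).2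
      omega
  have hind : IndepZ d I := by
    intro x hx y hy hxy hdvd
    obtain ⟨kk, hkk⟩ := hdvd
    have hk3 : kk < 3 := by
      by_contra hh
      push_neg at hh
      have : d * 3 ≤ d * kk := Nat.mul_le_mul_left d hh
      rcases hmem x hx with hx' | hx' <;> rcases hmem y hy with hy' | hy' <;> omega
    interval_cases kk <;>
      (rcases hmem x hx with hx' | hx' <;> rcases hmem y hy with hy' | hy' <;> omega)
  have hdisj : Disjoint (Finset.Icc 1 (d / 2)) (Finset.Icc d (d + t)) := by
    rw [Finset.disjoint_left]
    intro x hx hx'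
    have h1 := (Finset.mem_Icc.mp hx).2
    have h2 := (Finset.mem_Icc.mp hx').1
    omega
  have hcardI : I.card = d / 2 + (t + 1) := by
    rw [hI, Finset.card_union_of_disjoint hdisj, Nat.card_Icc, Nat.card_Icc]
    omega
  have hcardM : (Finset.Icc 1 n).card = n := by rw [Nat.card_Icc]; omega
  exact (key_s15 d n (Finset.Icc 1 n) I hcardM hsub hind).1 (by omega) (by omega)
end

section
/- Let n ≥ 5 be odd. Then Player B can force a win in the game Z(n, d) for every d ≥ n + 3. -/
/-- The set of elements of `M` that belong to a complete pair `{a, d-a}` on the board. -/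
def pcSet (d : ℕ) (M : Finset ℕ) : Finset ℕ :=
  M.filter (fun a => (d - a) ∈ M ∧ 2 * a ≠ d)

lemma pcSet_mono {d : ℕ} {M M' : Finset ℕ} (h : M' ⊆ M) : pcSet d M' ⊆ pcSet d M := by
  intro a ha
  simp only [pcSet, Finset.mem_filter] at *
  exact ⟨h ha.1, h ha.2.1, ha.2.2⟩

lemma key_s16 (d n : ℕ) (hd : n + 3 ≤ d) :
    ∀ m (M : Finset ℕ), M ⊆ Finset.Icc 1 n → M.card = m → Odd m →
      (pcSet d M).card + 3 ≤ m → BWins d true M := by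
  intro m
  induction m using Nat.strong_induction_on with
  | _ m ih =>
  intro M hsub hcard hodd hpc
  rw [BWins]
  have h2 : ¬ M.card ≤ 2 := by omega
  rw [if_neg h2, if_pos rfl]
  intro a ha
  rw [BWins]
  have hcard1 : (M.erase a).card = m - 1 := by rw [Finset.card_erase_of_mem ha, hcard]
  obtain ⟨k, hk⟩ := hodd
  by_cases hm3 : m = 3
  · -- base case : 3 numbers on the board, no complete pair
    rw [if_pos (by omega)]
    have hpc0 : (pcSet d M).card = 0 := by omega
    have hc2 : (M.erase a).card = 2 := by omega
    obtain ⟨x, y, hxy, hMe⟩ := Finset.card_eq_two.mp hc2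
    have hxM : x ∈ M.erase a := by rw [hMe]; simp
    have hyM : y ∈ M.erase a := by rw [hMe]; simp
    have hxI := hsub (Finset.erase_subset a M hxM)
    have hyI := hsub (Finset.erase_subset a M hyM)
    rw [Finset.mem_Icc] at hxI hyI
    rw [hMe, Finset.sum_pair hxy]
    simp only [id]
    intro hdvd
    obtain ⟨c, hc⟩ := hdvd
    have hsum : x + y = d := by
      rcases c with _ | _ | c
      · omega
      · omega
      · have h2d : 2 * d ≤ d * (c + 1 + 1) := by nlinarith
        omega
    have hxP : x ∈ pcSet d M := by
      refine Finset.mem_filter.mpr ⟨Finset.erase_subset a M hxM, ?_, ?_⟩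
      · have : d - x = y := by omega
        rw [this]; exact Finset.erase_subset a M hyM
      · omega
    have := Finset.card_pos.mpr ⟨x, hxP⟩
    omega
  · -- inductive step : m ≥ 5
    have hm5 : 5 ≤ m := by omega
    rw [if_neg (by omega), if_neg (by simp)]
    set M1 := M.erase a with hM1
    have hsub1 : M1 ⊆ Finset.Icc 1 n := fun c hc => hsub (Finset.erase_subset a M hc)
    rcases Finset.eq_empty_or_nonempty (pcSet d M1) with hemp | ⟨b, hb⟩
    · -- no complete pair : remove anything
      have hne : M1.Nonempty := Finset.card_pos.mp (by omega)
      obtain ⟨b, hb⟩ := hne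
      refine ⟨b, hb, ih (m - 2) (by omega) (M1.erase b)
        (fun c hc => hsub1 (Finset.erase_subset b M1 hc)) ?_ ⟨k - 1, by omega⟩ ?_⟩
      · rw [Finset.card_erase_of_mem hb]; omega
      · have : pcSet d (M1.erase b) ⊆ pcSet d M1 := pcSet_mono (Finset.erase_subset b M1)
        rw [hemp] at this
        have hz := Finset.card_le_card this
        rw [Finset.card_empty] at hz
        omega
    · -- there is a complete pair {b, d-b} : remove b
      rw [pcSet, Finset.mem_filter] at hb
      obtain ⟨hbM, hdbM, h2b⟩ := hb
      have hbI := hsub1 hbM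
      have hdbI := hsub1 hdbM
      rw [Finset.mem_Icc] at hbI hdbI
      refine ⟨b, hbM, ih (m - 2) (by omega) (M1.erase b)
        (fun c hc => hsub1 (Finset.erase_subset b M1 hc)) ?_ ⟨k - 1, by omega⟩ ?_⟩
      · rw [Finset.card_erase_of_mem hbM]; omega
      · -- pair count drops by at least 2
        have hbP : b ∈ pcSet d M1 := Finset.mem_filter.mpr ⟨hbM, hdbM, h2b⟩
        have hdbP : d - b ∈ pcSet d M1 := by
          refine Finset.mem_filter.mpr ⟨hdbM, ?_, by omega⟩
          have : d - (d - b) = b := by omega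
          rw [this]; exact hbM
        have hne : d - b ≠ b := by omega
        have hss : pcSet d (M1.erase b) ⊆ ((pcSet d M1).erase b).erase (d - b) := by
          intro c hc
          rw [pcSet, Finset.mem_filter] at hc
          obtain ⟨hcM, hdcM, h2c⟩ := hc
          have hcb : c ≠ b := Finset.ne_of_mem_erase hcM
          have hcI := hsub1 (Finset.erase_subset b M1 hcM)
          rw [Finset.mem_Icc] at hcI
          have hcdb : c ≠ d - b := by
            intro hcd
            have : d - c = b := by omega
            rw [this] at hdcM
            exact (Finset.notMem_erase b M1) hdcM
          refine Finset.mem_erase.mpr ⟨hcdb, Finset.mem_erase.mpr ⟨hcb, ?_⟩⟩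
          exact Finset.mem_filter.mpr ⟨Finset.erase_subset b M1 hcM,
            Finset.erase_subset b M1 hdcM, h2c⟩
        have hcards : (((pcSet d M1).erase b).erase (d - b)).card = (pcSet d M1).card - 2 := by
          rw [Finset.card_erase_of_mem (Finset.mem_erase.mpr ⟨hne, hdbP⟩),
            Finset.card_erase_of_mem hbP]
          omega
        have h1 := Finset.card_le_card hss
        have h2' := Finset.card_le_card (pcSet_mono (Finset.erase_subset a M) :
          pcSet d M1 ⊆ pcSet d M)
        have hbpos := Finset.card_pos.mpr ⟨b, hbP⟩
        omega

theorem stmt_16 (n d : ℕ) (hn : Odd n) (h5 : 5 ≤ n) (hd : n + 3 ≤ d) :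
    BWins d true (Finset.Icc 1 n) := by
  obtain ⟨j, hj⟩ := hn
  have hcard : (Finset.Icc 1 n).card = n := by rw [Nat.card_Icc]; omega
  refine key_s16 d n hd n _ (Finset.Subset.refl _) hcard ⟨j, hj⟩ ?_
  by_cases hdc : d = n + 3
  · -- d = n + 3 : pairs use {3,…,n} minus the midpoint (n+3)/2
    have hss : pcSet d (Finset.Icc 1 n) ⊆ (Finset.Icc 3 n).erase ((n + 3) / 2) := by
      intro c hc
      rw [pcSet, Finset.mem_filter, Finset.mem_Icc, Finset.mem_Icc] at hc
      rw [Finset.mem_erase, Finset.mem_Icc]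
      omega
    have hmem : (n + 3) / 2 ∈ Finset.Icc 3 n := by rw [Finset.mem_Icc]; omega
    have := Finset.card_le_card hss
    rw [Finset.card_erase_of_mem hmem, Nat.card_Icc] at this
    omega
  · -- d ≥ n + 4 : pairs use {d-n,…,n}, which has at most n-3 elements
    have hss : pcSet d (Finset.Icc 1 n) ⊆ Finset.Icc (d - n) n := by
      intro c hc
      rw [pcSet, Finset.mem_filter, Finset.mem_Icc, Finset.mem_Icc] at hc
      rw [Finset.mem_Icc]
      omega
    have := Finset.card_le_card hss
    rw [Nat.card_Icc] at this
    omega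
end

section
/- Let n ≥ 4 be even and d ≥ 2. Then Player B can force a win in the game Z(n, d). -/
lemma bwins_of_pairing (d : ℕ) (f : ℕ → ℕ) :
    ∀ M : Finset ℕ, M.Nonempty → Even M.card →
      (∀ x ∈ M, f x ∈ M) → (∀ x ∈ M, f (f x) = x) → (∀ x ∈ M, f x ≠ x) →
      (∀ x ∈ M, ¬ d ∣ x + f x) → BWins d true M := by
  intro M
  induction M using Finset.strongInduction with
  | _ M ih =>
    intro hne heven hclos hinv hfix hsum
    obtain ⟨x0, hx0⟩ := hne
    have hfx0 : f x0 ∈ M := hclos _ hx0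
    have hnefx0 : f x0 ≠ x0 := hfix _ hx0
    by_cases hc : M.card ≤ 2
    · have hsub : ({x0, f x0} : Finset ℕ) ⊆ M := by
        intro y hy
        simp only [Finset.mem_insert, Finset.mem_singleton] at hy
        rcases hy with rfl | rfl <;> assumption
      have hcard2 : ({x0, f x0} : Finset ℕ).card = 2 := by
        rw [Finset.card_insert_of_notMem (by simpa using hnefx0.symm), Finset.card_singleton]
      have hMeq : M = {x0, f x0} := by
        refine (Finset.eq_of_subset_of_card_le hsub ?_).symm
        rw [hcard2]; omega
      rw [BWins, if_pos hc, hMeq, Finset.sum_pair hnefx0.symm]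
      exact hsum _ hx0
    · push_neg at hc
      have hc4 : 4 ≤ M.card := by
        rcases heven with ⟨k, hk⟩; omega
    -- main step
      rw [BWins, if_neg (by omega)]
      simp only [if_true]
      intro a ha
      have hfa : f a ∈ M := hclos _ ha
      have hfa' : f a ≠ a := hfix _ ha
      rw [BWins, if_neg (by rw [Finset.card_erase_of_mem ha]; omega)]
      simp only [Bool.false_eq_true, if_false]
      refine ⟨f a, Finset.mem_erase.mpr ⟨hfa', hfa⟩, ?_⟩
      set M' := (M.erase a).erase (f a) with hM'
      have hmem : ∀ x, x ∈ M' ↔ x ≠ f a ∧ x ≠ a ∧ x ∈ M := by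
        intro x; simp [hM', Finset.mem_erase, and_assoc]
      have hcard' : M'.card = M.card - 2 := by
        rw [hM', Finset.card_erase_of_mem (Finset.mem_erase.mpr ⟨hfa', hfa⟩),
          Finset.card_erase_of_mem ha]
        omega
      have hss : M' ⊂ M := by
        refine Finset.ssubset_iff_of_subset (fun x hx => ((hmem x).1 hx).2.2) |>.mpr ⟨a, ha, ?_⟩
        intro hx; exact ((hmem a).1 hx).2.1 rfl
      apply ih M' hss
      · rw [← Finset.card_pos, hcard']; omega
      · rcases heven with ⟨k, hk⟩; rw [hcard']; exact ⟨k - 1, by omega⟩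
      · intro x hx
        obtain ⟨h1, h2, h3⟩ := (hmem x).1 hx
        refine (hmem _).2 ⟨?_, ?_, hclos _ h3⟩
        · intro h; apply h2; rw [← hinv x h3, h, hinv a ha]
        · intro h; apply h1; rw [← hinv x h3, h]
      · intro x hx; exact hinv x ((hmem x).1 hx).2.2
      · intro x hx; exact hfix x ((hmem x).1 hx).2.2
      · intro x hx; exact hsum x ((hmem x).1 hx).2.2

theorem stmt_17 (n d : ℕ) (hn : Even n) (h4 : 4 ≤ n) (hd : 2 ≤ d) :
    BWins d true (Finset.Icc 1 n) := by
  have h2n : 2 ∣ n := hn.two_dvd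
  have hne : (Finset.Icc 1 n).Nonempty := ⟨1, by simp [Finset.mem_Icc]; omega⟩
  have hcard : (Finset.Icc 1 n).card = n := by rw [Nat.card_Icc]; omega
  have heven : Even (Finset.Icc 1 n).card := by rw [hcard]; exact hn
  by_cases h1 : d ∣ n + 1
  · -- d odd, d ≥ 3
    have hdodd : ¬ 2 ∣ d := by
      intro h2d
      have : 2 ∣ n + 1 := h2d.trans h1
      omega
    by_cases h3 : d = 3
    · subst h3
      have h3n : 3 ∣ n + 1 := h1
      apply bwins_of_pairing 3
        (fun x => if x = 1 then 3 else if x = 3 then 1 else if x = 2 then n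
          else if x = n then 2 else n + 3 - x) _ hne heven
      all_goals intro x hx; simp only [Finset.mem_Icc] at hx ⊢
      · split_ifs <;> omega
      · split_ifs <;> omega
      · split_ifs <;> omega
      · split_ifs <;> omega
    · -- d ≥ 5 odd
      have hd5 : 5 ≤ d := by
        rcases Nat.lt_or_ge d 5 with h | h
        · interval_cases d <;> simp_all <;> omega
        · exact h
      apply bwins_of_pairing d
        (fun x => if x ≤ 2 then 3 - x else n + 3 - x) _ hne heven
      all_goals intro x hx; simp only [Finset.mem_Icc] at hx ⊢
      · split_ifs <;> omega
      · split_ifs <;> omega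
      · split_ifs <;> omega
      · split_ifs with h
        · intro hdvd
          have : x + (3 - x) = 3 := by omega
          rw [this] at hdvd
          have := Nat.le_of_dvd (by norm_num) hdvd
          interval_cases d <;> omega
        · intro hdvd
          have : x + (n + 3 - x) = n + 3 := by omega
          rw [this] at hdvd
          have hdvd2 := Nat.dvd_sub hdvd h1
          have heq : n + 3 - (n + 1) = 2 := by omega
          rw [heq] at hdvd2
          have : d ∣ 2 := hdvd2
          have := Nat.le_of_dvd (by norm_num) this
          omega
  · apply bwins_of_pairing d (fun x => n + 1 - x) _ hne heven
    all_goals intro x hx; simp only [Finset.mem_Icc] at hx ⊢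
    · omega
    · omega
    · omega
    · intro hdvd
      have : x + (n + 1 - x) = n + 1 := by omega
      rw [this] at hdvd
      exact h1 hdvd
end
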